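/- arXiv:2311.06006 — 3 statements merged into one kernel-verified Lean document; each statement's English description precedes it below -/
import Mathlib

section
/- Let h : D → ℝ be continuous on D and satisfy the staircase equation. Then for every k ≥ 0 the iterate T^k(0) lies in D, and for every n ≥ 1, R(n) = ∏_{k=0}^{n−1} h(T^k(0)) = exp(∑_{k=0}^{n−1} log h(T^k(0))). -/
open Real Finset

noncomputable section

/-- The golden mean φ = (1+√5)/2. -/
def phi : ℝ := (1 + Real.sqrt 5) / 2

/-- ψ = (1−√5)/2 = −1/φ. -/
def psi : ℝ := (1 - Real.sqrt 5) / 2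

/-- A word `a : Fin k → ℕ` is binary if all its letters are 0 or 1. -/
def IsBin {k : ℕ} (a : Fin k → ℕ) : Prop := ∀ i, a i ≤ 1

/-- N(a) = ∑_{i=1}^k a_i F_{k+2−i}  (here `i : Fin k` corresponds to `i+1`). -/
def Nw {k : ℕ} (a : Fin k → ℕ) : ℕ := ∑ i : Fin k, a i * Nat.fib (k + 1 - (i : ℕ))

/-- X(a) = ∑_{i=1}^k a_i φ^{k+2−i}. -/
def Xw {k : ℕ} (a : Fin k → ℕ) : ℝ := ∑ i : Fin k, (a i : ℝ) * phi ^ (k + 1 - (i : ℕ))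

/-- Y(a) = ∑_{i=1}^k a_i ψ^{k+2−i}. -/
def Yw {k : ℕ} (a : Fin k → ℕ) : ℝ := ∑ i : Fin k, (a i : ℝ) * psi ^ (k + 1 - (i : ℕ))

/-- R(n): the number of partitions of n into distinct Fibonacci numbers, i.e. the number
of finite sets S of integers, each ≥ 2, with n = ∑_{i∈S} F_i.  (So R(0) = 1.) -/
def R (n : ℕ) : ℕ :=
  Nat.card {S : Finset ℕ // (∀ i ∈ S, 2 ≤ i) ∧ ∑ i ∈ S, Nat.fib i = n}

/-- `IsZeck n b` : `b = b_1⋯b_k` is the Zeckendorf word of `n ≥ 1`, i.e. a binary word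
with `b_1 = 1`, no two consecutive 1's, and N(b) = n. -/
def IsZeck (n : ℕ) {k : ℕ} (b : Fin k → ℕ) : Prop :=
  IsBin b ∧ (∀ h : 0 < k, b ⟨0, h⟩ = 1) ∧
    (∀ i j : Fin k, (j : ℕ) = (i : ℕ) + 1 → b i * b j = 0) ∧ Nw b = n

/-- `IsXY n x y` : `(x, y) = (x_n, y_n)`, i.e. `x = X(b)` and `y = Y(b)` for the
Zeckendorf word `b` of `n` when `n ≥ 1`, and `(x, y) = (0, 0)` when `n = 0`. -/
def IsXY (n : ℕ) (x y : ℝ) : Prop :=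
  (n = 0 ∧ x = 0 ∧ y = 0) ∨
    ∃ (k : ℕ) (b : Fin k → ℕ), IsZeck n b ∧ x = Xw b ∧ y = Yw b

/-- The rotation T by 1/φ² on [−1/φ², 1/φ), extended to ℝ by the same formula. -/
def T (y : ℝ) : ℝ := if y < 1 / phi ^ 3 then y + 1 / phi ^ 2 else y + 1 / phi ^ 2 - 1

/-- The domain D = (−1/φ², 1/φ³) ∪ (1/φ³, 1/φ). -/
def D : Set ℝ :=
  Set.Ioo (-(1 / phi ^ 2)) (1 / phi ^ 3) ∪ Set.Ioo (1 / phi ^ 3) (1 / phi)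

/-- `h` satisfies the staircase equation:
h(y) = 1 + h(−φy) on (−1/φ², −1/φ⁴); h(y) = 1 on [−1/φ⁴, 0];
h(y) = h(−φy + 1/φ)/(1 + h(−φy + 1/φ)) on (0, 1/φ³) (the denominator being nonzero);
and h(y) = h(−φy + 1/φ) on (1/φ³, 1/φ). -/
def Staircase (h : ℝ → ℝ) : Prop :=
  (∀ y ∈ Set.Ioo (-(1 / phi ^ 2)) (-(1 / phi ^ 4)), h y = 1 + h (-phi * y)) ∧
  (∀ y ∈ Set.Icc (-(1 / phi ^ 4)) 0, h y = 1) ∧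
  (∀ y ∈ Set.Ioo 0 (1 / phi ^ 3),
      1 + h (-phi * y + 1 / phi) ≠ 0 ∧
      h y = h (-phi * y + 1 / phi) / (1 + h (-phi * y + 1 / phi))) ∧
  (∀ y ∈ Set.Ioo (1 / phi ^ 3) (1 / phi), h y = h (-phi * y + 1 / phi))

section Prelim

lemma phi_eq_gold : phi = goldenRatio := rfl
lemma psi_eq_gold : psi = goldenConj := rfl

lemma psi_sq : psi ^ 2 = psi + 1 := goldenConj_sq
lemma phi_mul_psi : phi * psi = -1 := goldenRatio_mul_goldenConj
lemma phi_add_psi : phi + psi = 1 := goldenRatio_add_goldenConj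
lemma phi_pos : 0 < phi := goldenRatio_pos
lemma psi_neg : psi < 0 := goldenConj_neg

lemma psi_lb : (-0.619 : ℝ) < psi := by
  have h5 : Real.sqrt 5 < 2.238 := by
    rw [show (2.238:ℝ) = Real.sqrt (2.238^2) by rw [Real.sqrt_sq (by norm_num)]]
    apply Real.sqrt_lt_sqrt (by norm_num)
    norm_num
  unfold psi; linarith

lemma psi_ub : psi < -0.618 := by
  have h5 : (2.236:ℝ) < Real.sqrt 5 := by
    rw [show (2.236:ℝ) = Real.sqrt (2.236^2) by rw [Real.sqrt_sq (by norm_num)]]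
    apply Real.sqrt_lt_sqrt (by norm_num)
    norm_num
  unfold psi; linarith

lemma psi_cube : psi ^ 3 = 2 * psi + 1 := by
  have := psi_sq; nlinarith [psi_sq]

lemma psi_four : psi ^ 4 = 3 * psi + 2 := by nlinarith [psi_sq]

lemma phi_eq : phi = 1 - psi := by have := phi_add_psi; linarith

lemma c1_eq : 1 / phi = -psi := by
  rw [one_div, phi_eq_gold, inv_goldenRatio, psi_eq_gold]

lemma c2_eq : 1 / phi ^ 2 = psi ^ 2 := by
  rw [one_div, ← inv_pow, phi_eq_gold, inv_goldenRatio, psi_eq_gold, neg_pow]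
  ring

lemma c3_eq : 1 / phi ^ 3 = -psi ^ 3 := by
  rw [one_div, ← inv_pow, phi_eq_gold, inv_goldenRatio, psi_eq_gold, neg_pow]
  ring

lemma c4_eq : 1 / phi ^ 4 = psi ^ 4 := by
  rw [one_div, ← inv_pow, phi_eq_gold, inv_goldenRatio, psi_eq_gold, neg_pow]
  ring

lemma psi_irr : Irrational psi := psi_eq_gold ▸ goldenConj_irrational

end Prelim
section Ids
lemma id1 : phi * psi ^ 2 = -psi := by linear_combination psi * phi_mul_psi
lemma id2 : phi * psi ^ 3 = -psi ^ 2 := by linear_combination psi^2 * phi_mul_psi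
lemma id3 : phi * psi ^ 4 = -psi ^ 3 := by linear_combination psi^3 * phi_mul_psi
end Ids
section Dyn

/-- y n : representative of nψ mod 1 in [−ψ², −ψ). -/
def yy (n : ℕ) : ℝ := Int.fract ((n : ℝ) * psi + psi ^ 2) - psi ^ 2

lemma psi_sq_mem : (0:ℝ) ≤ psi ^ 2 ∧ psi ^ 2 < 1 := by
  constructor
  · positivity
  · nlinarith [psi_lb, psi_ub]

lemma yy_eq (n : ℕ) : yy n = (n : ℝ) * psi - ⌊(n : ℝ) * psi + psi ^ 2⌋ := by
  unfold yy Int.fract; ring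

lemma yy_mem (n : ℕ) : -psi ^ 2 ≤ yy n ∧ yy n < -psi := by
  have h1 := Int.fract_nonneg ((n : ℝ) * psi + psi ^ 2)
  have h2 := Int.fract_lt_one ((n : ℝ) * psi + psi ^ 2)
  have hs := psi_sq
  unfold yy
  constructor <;> linarith

lemma yy_unique {n : ℕ} {z : ℝ} (k : ℤ) (hz : z = (n : ℝ) * psi + k)
    (h1 : -psi ^ 2 ≤ z) (h2 : z < -psi) : z = yy n := by
  have hy := yy_mem n
  have hyk := yy_eq n
  set K : ℤ := ⌊(n : ℝ) * psi + psi ^ 2⌋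
  have hd : z - yy n = ((k + K : ℤ) : ℝ) := by
    rw [hz, hyk]; push_cast; ring
  have hlt : |((k + K : ℤ) : ℝ)| < 1 := by
    rw [← hd, abs_lt]
    have := psi_sq
    constructor <;> linarith [hy.1, hy.2]
  have : (k + K : ℤ) = 0 := by
    have := abs_lt.mp hlt
    have h1' : (-1 : ℤ) < k + K := by exact_mod_cast (by push_cast; linarith : (-1:ℝ) < ((k+K:ℤ):ℝ))
    have h2' : (k + K : ℤ) < 1 := by exact_mod_cast (by push_cast; linarith : ((k+K:ℤ):ℝ) < 1)
    omega
  have : ((k + K : ℤ) : ℝ) = 0 := by exact_mod_cast this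
  linarith [hd, this]

lemma yy_int_coeff {n : ℕ} {a b : ℤ} (hy : yy n = (a : ℝ) + (b : ℝ) * psi) : (n : ℤ) = b := by
  by_contra hne
  have hyk := yy_eq n
  set K : ℤ := ⌊(n : ℝ) * psi + psi ^ 2⌋
  have : ((n : ℤ) - b : ℝ) * psi = ((a + K : ℤ) : ℝ) := by push_cast; push_cast at hyk; linarith
  have hb : ((n:ℤ) - b : ℝ) ≠ 0 := by
    intro h0
    apply hne
    have : ((n:ℤ) - b : ℤ) = 0 := by exact_mod_cast h0
    omega
  have hr : psi = ((a + K : ℤ) : ℝ) / (((n:ℤ) - b : ℤ) : ℝ) := by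
    rw [eq_div_iff (by exact_mod_cast hb)]
    push_cast at this ⊢
    linarith
  exact psi_irr ⟨((a + K : ℤ) : ℚ) / (((n:ℤ) - b : ℤ) : ℚ), by rw [hr]; push_cast; norm_num⟩
  
lemma yy_zero : yy 0 = 0 := by
  unfold yy
  rw [show ((0:ℕ):ℝ) * psi + psi ^ 2 = psi ^ 2 by push_cast; ring,
    Int.fract_eq_self.mpr ⟨psi_sq_mem.1, psi_sq_mem.2⟩]
  ring

lemma yy_ne_zero {n : ℕ} (hn : 1 ≤ n) : yy n ≠ 0 := by
  intro h
  have := yy_int_coeff (a := 0) (b := 0) (by rw [h]; push_cast; ring)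
  omega

lemma yy_ne_c3 (n : ℕ) : yy n ≠ -psi ^ 3 := by
  intro h
  have := yy_int_coeff (a := -1) (b := -2) (by rw [h, psi_cube]; push_cast; ring)
  omega

lemma yy_lb (n : ℕ) : -psi ^ 2 < yy n := by
  rcases lt_or_eq_of_le (yy_mem n).1 with h | h
  · exact h
  · exfalso
    have := yy_int_coeff (a := -1) (b := -1) (by rw [← h, psi_sq]; push_cast; ring)
    omega

/-- the Fibonacci left-shift on natural numbers, defined analytically. -/
def LL (m : ℕ) : ℕ := m + (-(⌊(m:ℝ) * psi + psi ^ 2⌋)).toNat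

lemma floor_nonpos (m : ℕ) : ⌊(m:ℝ) * psi + psi ^ 2⌋ ≤ 0 := by
  have : (m:ℝ) * psi + psi ^ 2 < 1 := by
    have : (m:ℝ) * psi ≤ 0 := mul_nonpos_of_nonneg_of_nonpos (by positivity) (le_of_lt psi_neg)
    nlinarith [psi_sq_mem.2]
  have := Int.floor_le_floor (le_of_lt this)  -- not needed
  have h2 : ⌊(m:ℝ) * psi + psi ^ 2⌋ < 1 := Int.floor_lt.mpr (by push_cast; linarith)
  omega

lemma LL_cast (m : ℕ) : ((LL m : ℕ) : ℝ) = phi * m + yy m := by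
  unfold LL
  have hK := floor_nonpos m
  have hz : (((-(⌊(m:ℝ) * psi + psi ^ 2⌋)).toNat : ℤ)) = -(⌊(m:ℝ) * psi + psi ^ 2⌋) :=
    Int.toNat_of_nonneg (by omega)
  have : ((-(⌊(m:ℝ) * psi + psi ^ 2⌋)).toNat : ℝ) = -((⌊(m:ℝ) * psi + psi ^ 2⌋ : ℤ) : ℝ) := by
    exact_mod_cast hz
  push_cast [this]
  rw [yy_eq, phi_eq]
  push_cast
  ring

lemma LL_zero : LL 0 = 0 := by
  have := LL_cast 0
  rw [yy_zero] at this
  push_cast at this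
  exact_mod_cast (by linarith : ((LL 0 : ℕ) : ℝ) = 0)

lemma LL_strictMono : StrictMono LL := by
  apply strictMono_nat_of_lt_succ
  intro m
  have h1 := LL_cast m
  have h2 := LL_cast (m + 1)
  have hm1 := yy_mem m
  have hm2 := yy_lb (m+1)
  have : ((LL m : ℕ) : ℝ) < ((LL (m+1) : ℕ) : ℝ) := by
    rw [h1, h2]; push_cast
    nlinarith [psi_sq, psi_ub, phi_eq]
  exact_mod_cast this

lemma yy_succ_lt {m : ℕ} (hm : yy m < -psi ^ 3) : yy (m + 1) = yy m + psi ^ 2 := by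
  obtain ⟨k, hk⟩ : ∃ k : ℤ, yy m = (m : ℝ) * psi - k := ⟨_, yy_eq m⟩
  have := (yy_unique (n := m+1) (z := yy m + psi ^ 2) (1 - k)
    (by rw [hk, psi_sq]; push_cast; ring)
    (by nlinarith [yy_mem m, psi_sq])
    (by nlinarith [psi_sq, psi_cube])).symm
  linarith [this]

lemma yy_succ_ge {m : ℕ} (hm : -psi ^ 3 ≤ yy m) : yy (m + 1) = yy m + psi := by
  obtain ⟨k, hk⟩ : ∃ k : ℤ, yy m = (m : ℝ) * psi - k := ⟨_, yy_eq m⟩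
  have := (yy_unique (n := m+1) (z := yy m + psi) (-k)
    (by rw [hk]; push_cast; ring)
    (by nlinarith [psi_sq, psi_cube])
    (by nlinarith [yy_mem m, psi_neg])).symm
  linarith [this]

lemma LL_succ_lt {m : ℕ} (hm : yy m < -psi ^ 3) : LL (m + 1) = LL m + 2 := by
  have h1 := LL_cast m
  have h2 := LL_cast (m + 1)
  rw [yy_succ_lt hm] at h2
  have : ((LL (m+1) : ℕ) : ℝ) = ((LL m + 2 : ℕ) : ℝ) := by
    push_cast at h2 ⊢
    rw [h2, h1]
    nlinarith [psi_sq, phi_add_psi]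
  exact_mod_cast this

lemma LL_succ_ge {m : ℕ} (hm : -psi ^ 3 ≤ yy m) : LL (m + 1) = LL m + 1 := by
  have h1 := LL_cast m
  have h2 := LL_cast (m + 1)
  rw [yy_succ_ge hm] at h2
  have : ((LL (m+1) : ℕ) : ℝ) = ((LL m + 1 : ℕ) : ℝ) := by
    push_cast at h2 ⊢
    rw [h2, h1]
    nlinarith [phi_add_psi]
  exact_mod_cast this

lemma yy_pred {m : ℕ} (hm : 0 < yy (m + 1)) :
    yy m = yy (m + 1) - psi ^ 2 ∧ yy m < -psi ^ 3 := by
  rcases lt_or_ge (yy m) (-psi ^ 3) with h | h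
  · have := yy_succ_lt h
    exact ⟨by linarith, h⟩
  · exfalso
    have := yy_succ_ge h
    have := (yy_mem m).2
    nlinarith [psi_neg]

end Dyn
section Decomp

lemma decomp0 {n : ℕ} (hn : 1 ≤ n) (hy : yy n < -psi ^ 3) :
    ∃ m : ℕ, m < n ∧ LL m = n ∧ yy m = -phi * yy n := by
  set k : ℤ := ⌊(n:ℝ) * psi + psi ^ 2⌋ with hk
  have hk0 : k ≤ 0 := floor_nonpos n
  have hyn : yy n = (n:ℝ) * psi - k := yy_eq n
  set M : ℕ := (-k).toNat with hM
  have hcast : ((M : ℕ) : ℝ) = -(k : ℝ) := by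
    have := Int.toNat_of_nonneg (by omega : (0:ℤ) ≤ -k); exact_mod_cast this
  have hyM : yy M = -phi * yy n := by
    refine (yy_unique (n := M) ((n : ℤ) + k) ?_ ?_ ?_).symm
    · rw [hcast, hyn, phi_eq]
      push_cast
      linear_combination (n : ℝ) * psi_sq
    · have h1 : phi * yy n < phi * (-psi ^ 3) :=
        mul_lt_mul_of_pos_left hy phi_pos
      have h2 : phi * (-psi ^ 3) = psi ^ 2 := by linear_combination -id2
      linarith
    · have h1 : phi * (-psi ^ 2) < phi * yy n :=
        mul_lt_mul_of_pos_left (yy_lb n) phi_pos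
      have h2 : phi * (-psi ^ 2) = psi := by linear_combination -id1
      linarith
  have hLM : LL M = n := by
    have h1 : ((LL M : ℕ) : ℝ) = (n : ℝ) := by
      rw [LL_cast, hyM, hyn, phi_eq, hcast]
      push_cast
      linear_combination (n : ℝ) * psi_sq
    exact_mod_cast h1
  have hlt : M < n := by
    rcases Nat.eq_zero_or_pos M with h0 | h0
    · omega
    · have h1 : ((LL M : ℕ) : ℝ) = (n : ℝ) := by rw [hLM]
      rw [LL_cast] at h1
      have hM1 : (1 : ℝ) ≤ (M : ℝ) := by exact_mod_cast h0
      have := yy_lb M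
      have : ((M : ℕ) : ℝ) < (n : ℝ) := by nlinarith [psi_sq, psi_ub, phi_eq]
      exact_mod_cast this
  exact ⟨M, hlt, hLM, hyM⟩

lemma decomp1 {n : ℕ} (hn : 1 ≤ n) (hy : 0 < yy n) :
    ∃ m : ℕ, m < n ∧ LL m + 1 = n ∧ yy m = -phi * yy n - psi := by
  set k : ℤ := ⌊(n:ℝ) * psi + psi ^ 2⌋ with hk
  have hyn : yy n = (n:ℝ) * psi - k := yy_eq n
  have hk1 : k ≤ -1 := by
    have h1 : (k : ℝ) < (n : ℝ) * psi := by linarith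
    have h2 : (n : ℝ) * psi ≤ psi := by
      have : (1:ℝ) ≤ (n:ℝ) := by exact_mod_cast hn
      nlinarith [psi_neg]
    have : (k : ℝ) < 0 := by linarith [psi_neg]
    have : k < 0 := by exact_mod_cast this
    omega
  set M : ℕ := (-k-1).toNat with hM
  have hcast : ((M : ℕ) : ℝ) = -(k : ℝ) - 1 := by
    have := Int.toNat_of_nonneg (by omega : (0:ℤ) ≤ -k-1); exact_mod_cast this
  have hyM : yy M = -phi * yy n - psi := by
    refine (yy_unique (n := M) ((n : ℤ) + k) ?_ ?_ ?_).symm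
    · rw [hcast, hyn, phi_eq]
      push_cast
      linear_combination (n : ℝ) * psi_sq
    · have h1 : phi * yy n < phi * (-psi) :=
        mul_lt_mul_of_pos_left (yy_mem n).2 phi_pos
      have h2 : phi * (-psi) = 1 := by linear_combination -phi_mul_psi
      nlinarith [psi_sq]
    · have h1 : 0 < phi * yy n := mul_pos phi_pos hy
      linarith
  have hLM : LL M + 1 = n := by
    have h1 : ((LL M : ℕ) : ℝ) + 1 = (n : ℝ) := by
      rw [LL_cast, hyM, hyn, phi_eq, hcast]
      push_cast
      linear_combination (n : ℝ) * psi_sq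
    exact_mod_cast h1
  have hlt : M < n := by
    rcases Nat.eq_zero_or_pos M with h0 | h0
    · omega
    · have h1 : ((LL M : ℕ) : ℝ) + 1 = (n : ℝ) := by
        exact_mod_cast congrArg (fun x : ℕ => (x : ℝ)) hLM
      rw [LL_cast] at h1
      have hM1 : (1 : ℝ) ≤ (M : ℝ) := by exact_mod_cast h0
      have := yy_lb M
      have : ((M : ℕ) : ℝ) < (n : ℝ) := by nlinarith [psi_sq, psi_ub, phi_eq]
      exact_mod_cast this
  exact ⟨M, hlt, hLM, hyM⟩

end Decomp
section Comb

/-- Number of representations of `n` as a sum of distinct Fibonacci numbers with indices ≥ c. -/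
def Rc (c n : ℕ) : ℕ :=
  Nat.card {S : Finset ℕ // (∀ i ∈ S, c ≤ i) ∧ ∑ i ∈ S, Nat.fib i = n}

lemma R_eq_Rc (n : ℕ) : R n = Rc 2 n := rfl

lemma self_le_fib_add_one : ∀ u : ℕ, u ≤ Nat.fib u + 1 := by
  intro u
  induction u using Nat.strong_induction_on with
  | _ u ih =>
    match u with
    | 0 => simp
    | 1 => simp
    | 2 => simp [Nat.fib]
    | (v + 3) =>
      have h1 := ih (v + 2) (by omega)
      have h2 : 0 < Nat.fib (v + 1) := Nat.fib_pos.mpr (by omega)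
      have h3 : Nat.fib (v + 3) = Nat.fib (v + 1) + Nat.fib (v + 2) := Nat.fib_add_two
      omega

lemma rep_subset_range {c n : ℕ} {S : Finset ℕ}
    (hS : (∀ i ∈ S, c ≤ i) ∧ ∑ i ∈ S, Nat.fib i = n) : S ⊆ Finset.range (n + 2) := by
  intro u hu
  have h1 : Nat.fib u ≤ n := hS.2 ▸ Finset.single_le_sum (fun i _ => Nat.zero_le _) hu
  have h2 := self_le_fib_add_one u
  simp only [Finset.mem_range]
  omega

instance rep_finite (c n : ℕ) :
    Finite {S : Finset ℕ // (∀ i ∈ S, c ≤ i) ∧ ∑ i ∈ S, Nat.fib i = n} := by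
  have : ∀ S : {S : Finset ℕ // (∀ i ∈ S, c ≤ i) ∧ ∑ i ∈ S, Nat.fib i = n},
      S.1 ∈ (Finset.range (n + 2)).powerset := fun S =>
    Finset.mem_powerset.mpr (rep_subset_range S.2)
  exact Finite.of_injective
    (fun S => (⟨S.1, this S⟩ : ((Finset.range (n + 2)).powerset : Finset (Finset ℕ))))
    (fun S S' h => Subtype.ext (by simpa using congrArg Subtype.val h))

lemma Rc_two_zero : Rc 2 0 = 1 := by
  have : ∀ S : {S : Finset ℕ // (∀ i ∈ S, 2 ≤ i) ∧ ∑ i ∈ S, Nat.fib i = 0},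
      S = ⟨(∅ : Finset ℕ), by simp⟩ := by
    rintro ⟨S, hS1, hS2⟩
    ext u
    simp only [Finset.notMem_empty, iff_false]
    intro hu
    have h1 : 0 < Nat.fib u := Nat.fib_pos.mpr (by have := hS1 u hu; omega)
    have h2 : Nat.fib u ≤ 0 := hS2 ▸ Finset.single_le_sum (fun i _ => Nat.zero_le _) hu
    omega
  haveI : Unique {S : Finset ℕ // (∀ i ∈ S, 2 ≤ i) ∧ ∑ i ∈ S, Nat.fib i = 0} :=
    { default := ⟨(∅ : Finset ℕ), by simp⟩, uniq := this }
  exact Nat.card_unique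

lemma Rc_two_one : Rc 2 1 = 1 := by
  have hf2 : Nat.fib 2 = 1 := rfl
  have hmem : (∀ i ∈ ({2} : Finset ℕ), 2 ≤ i) ∧ ∑ i ∈ ({2} : Finset ℕ), Nat.fib i = 1 := by
    constructor
    · intro i hi; simp at hi; omega
    · simp [hf2]
  have huniq : ∀ S : {S : Finset ℕ // (∀ i ∈ S, 2 ≤ i) ∧ ∑ i ∈ S, Nat.fib i = 1},
      S = ⟨({2} : Finset ℕ), hmem⟩ := by
    rintro ⟨S, hS1, hS2⟩
    have hsub : S ⊆ {2} := by
      intro u hu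
      have h2 : Nat.fib u ≤ 1 := hS2 ▸ Finset.single_le_sum (fun i _ => Nat.zero_le _) hu
      have h3 : 2 ≤ u := hS1 u hu
      have h4 : u < 3 := by
        by_contra hc
        have h5 : Nat.fib 3 ≤ Nat.fib u := Nat.fib_mono (by omega)
        have h6 : Nat.fib 3 = 2 := rfl
        omega
      have : u = 2 := by omega
      simp [this]
    have hne : S.Nonempty := by
      by_contra hc
      rw [Finset.not_nonempty_iff_eq_empty] at hc
      rw [hc] at hS2
      simp at hS2
    apply Subtype.ext
    show S = ({2} : Finset ℕ)
    exact Finset.eq_of_subset_of_card_le hsub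
      (by rw [Finset.card_singleton]; exact Finset.card_pos.mpr hne)
  haveI : Unique {S : Finset ℕ // (∀ i ∈ S, 2 ≤ i) ∧ ∑ i ∈ S, Nat.fib i = 1} :=
    { default := ⟨({2} : Finset ℕ), hmem⟩, uniq := huniq }
  exact Nat.card_unique

/-- split by whether 2 ∈ S -/
lemma Rc_split (n : ℕ) : Rc 2 (n + 1) = Rc 3 (n + 1) + Rc 3 n := by
  have hf2 : Nat.fib 2 = 1 := rfl
  rw [Rc, Rc, Rc, ← Nat.card_sum]
  apply Nat.card_congr
  exact {
    toFun := fun S =>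
      if h : 2 ∈ S.1 then
        Sum.inr ⟨S.1.erase 2, by
          constructor
          · intro i hi
            have h1 := S.2.1 i (Finset.mem_of_mem_erase hi)
            have h2 := Finset.ne_of_mem_erase hi
            omega
          · have h3 : ∑ i ∈ S.1, Nat.fib i = Nat.fib 2 + ∑ i ∈ S.1.erase 2, Nat.fib i :=
              (Finset.add_sum_erase _ _ h).symm
            have h4 := S.2.2
            omega⟩
      else
        Sum.inl ⟨S.1, by
          refine ⟨fun i hi => ?_, S.2.2⟩
          have h1 := S.2.1 i hi
          have h2 : i ≠ 2 := fun e => h (e ▸ hi)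
          omega⟩,
    invFun := fun S => match S with
      | Sum.inl S => ⟨S.1, fun i hi => by have := S.2.1 i hi; omega, S.2.2⟩
      | Sum.inr S => ⟨insert 2 S.1, by
          have h2 : 2 ∉ S.1 := fun hc => by have := S.2.1 2 hc; omega
          constructor
          · intro i hi
            rcases Finset.mem_insert.mp hi with rfl | hi'
            · omega
            · have := S.2.1 i hi'; omega
          · rw [Finset.sum_insert h2, S.2.2, hf2]; omega⟩,
    left_inv := by
      rintro ⟨S, hS⟩
      by_cases h : 2 ∈ S
      · simp only [h, dif_pos]
        exact Subtype.ext (Finset.insert_erase h)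
      · simp only [h, dif_neg, not_false_iff]
    right_inv := by
      rintro (⟨S, hS⟩ | ⟨S, hS⟩)
      · have h2 : 2 ∉ S := fun hc => by have := hS.1 2 hc; omega
        simp only
        rw [dif_neg h2]
      · have h2 : 2 ∉ S := fun hc => by have := hS.1 2 hc; omega
        simp only
        rw [dif_pos (Finset.mem_insert_self 2 S)]
        apply congrArg
        exact Subtype.ext (Finset.erase_insert h2)
  }

end Comb
section PsiSum

lemma psi_pow_succ (e : ℕ) : psi ^ (e + 1) = (Nat.fib (e + 1) : ℝ) * psi + Nat.fib e := by
  induction e with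
  | zero => simp
  | succ e ih =>
    have : psi ^ (e + 2) = psi ^ (e + 1) * psi := by ring
    rw [this, ih, Nat.fib_add_two]
    push_cast
    linear_combination (Nat.fib (e+1) : ℝ) * psi_sq

lemma fib_succ_real (e : ℕ) : (Nat.fib (e + 1) : ℝ) = phi * Nat.fib e + psi ^ e := by
  cases e with
  | zero => simp
  | succ e =>
    have h1 := psi_pow_succ e
    rw [Nat.fib_add_two, phi_eq]
    push_cast
    linarith [h1]

/-- geometric sums of even/odd powers of psi -/
lemma geomE (K : ℕ) : ∑ j ∈ Finset.Icc 1 K, psi ^ (2 * j) = -psi + psi ^ (2 * K + 1) := by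
  induction K with
  | zero => simp
  | succ K ih =>
    rw [Finset.sum_Icc_succ_top (by omega), ih]
    have : psi ^ (2 * (K + 1) + 1) = psi ^ (2 * K + 1) * psi ^ 2 := by ring
    rw [this, psi_sq]
    ring

lemma geomO (K : ℕ) : ∑ j ∈ Finset.Icc 1 K, psi ^ (2 * j + 1) = -psi ^ 2 + psi ^ (2 * K + 2) := by
  induction K with
  | zero => simp
  | succ K ih =>
    rw [Finset.sum_Icc_succ_top (by omega), ih]
    have : psi ^ (2 * (K + 1) + 2) = psi ^ (2 * K + 2) * psi ^ 2 := by ring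
    have h2 : psi ^ (2 * (K + 1) + 1) = psi ^ (2 * K + 2) * psi := by ring
    rw [this, h2, psi_sq]
    ring

lemma psi_pow_even_nonneg {u : ℕ} (hu : Even u) : 0 ≤ psi ^ u := hu.pow_nonneg psi

lemma psi_pow_odd_nonpos {u : ℕ} (hu : ¬ Even u) : psi ^ u ≤ 0 :=
  (Nat.not_even_iff_odd.mp hu).pow_nonpos (le_of_lt psi_neg)

lemma sum_psi_ub {S : Finset ℕ} (h2 : ∀ u ∈ S, 2 ≤ u) : ∑ u ∈ S, psi ^ u < -psi := by
  classical
  set K := S.sup id with hK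
  have hsplit := Finset.sum_filter_add_sum_filter_not S Even (fun u => psi ^ u)
  have hodd : ∑ u ∈ S.filter (fun u => ¬ Even u), psi ^ u ≤ 0 :=
    Finset.sum_nonpos (fun u hu => psi_pow_odd_nonpos (Finset.mem_filter.mp hu).2)
  have hsub : S.filter (fun u => Even u) ⊆ (Finset.Icc 1 K).image (fun j => 2 * j) := by
    intro u hu
    obtain ⟨huS, huE⟩ := Finset.mem_filter.mp hu
    obtain ⟨j, hj⟩ := huE
    have hu2 := h2 u huS
    have huK : u ≤ K := Finset.le_sup (f := id) huS
    refine Finset.mem_image.mpr ⟨j, Finset.mem_Icc.mpr ⟨by omega, by omega⟩, by omega⟩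
  have heven : ∑ u ∈ S.filter (fun u => Even u), psi ^ u ≤
      ∑ u ∈ (Finset.Icc 1 K).image (fun j => 2 * j), psi ^ u := by
    apply Finset.sum_le_sum_of_subset_of_nonneg hsub
    intro u hu _
    obtain ⟨j, _, hj⟩ := Finset.mem_image.mp hu
    exact psi_pow_even_nonneg ⟨j, by omega⟩
  have himg : ∑ u ∈ (Finset.Icc 1 K).image (fun j => 2 * j), psi ^ u
      = ∑ j ∈ Finset.Icc 1 K, psi ^ (2 * j) :=
    Finset.sum_image (fun a _ b _ hab => by omega)
  have hgeo := geomE K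
  have hneg : psi ^ (2 * K + 1) < 0 := (Odd.pow_neg ⟨K, by omega⟩ psi_neg)
  linarith

lemma sum_psi_lb {S : Finset ℕ} (h2 : ∀ u ∈ S, 2 ≤ u) : -psi ^ 2 < ∑ u ∈ S, psi ^ u := by
  classical
  set K := S.sup id with hK
  have hsplit := Finset.sum_filter_add_sum_filter_not S Even (fun u => psi ^ u)
  have heven0 : 0 ≤ ∑ u ∈ S.filter (fun u => Even u), psi ^ u :=
    Finset.sum_nonneg (fun u hu => psi_pow_even_nonneg (Finset.mem_filter.mp hu).2)
  have hsub : S.filter (fun u => ¬ Even u) ⊆ (Finset.Icc 1 K).image (fun j => 2 * j + 1) := by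
    intro u hu
    obtain ⟨huS, huO⟩ := Finset.mem_filter.mp hu
    obtain ⟨j, hj⟩ := Nat.not_even_iff_odd.mp huO
    have hu2 := h2 u huS
    have huK : u ≤ K := Finset.le_sup (f := id) huS
    refine Finset.mem_image.mpr ⟨j, Finset.mem_Icc.mpr ⟨by omega, by omega⟩, by omega⟩
  have hodd : ∑ u ∈ (Finset.Icc 1 K).image (fun j => 2 * j + 1), psi ^ u ≤
      ∑ u ∈ S.filter (fun u => ¬ Even u), psi ^ u := by
    have := Finset.sum_le_sum_of_subset_of_nonneg
      (f := fun u => -psi ^ u) hsub ?_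
    · simp only [Finset.sum_neg_distrib] at this
      linarith
    · intro u hu _
      obtain ⟨j, _, hj⟩ := Finset.mem_image.mp hu
      have : psi ^ u ≤ 0 := psi_pow_odd_nonpos (by rw [← hj]; simp [parity_simps])
      show (0:ℝ) ≤ -psi ^ u
      linarith
  have himg : ∑ u ∈ (Finset.Icc 1 K).image (fun j => 2 * j + 1), psi ^ u
      = ∑ j ∈ Finset.Icc 1 K, psi ^ (2 * j + 1) :=
    Finset.sum_image (fun a _ b _ hab => by omega)
  have hgeo := geomO K
  have hpos : 0 < psi ^ (2 * K + 2) := (Even.pow_pos ⟨K + 1, by omega⟩ (by exact psi_neg.ne))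
  linarith

/-- any representation of n with indices ≥ 2 has ψ-weight y n -/
lemma sum_psi_eq {S : Finset ℕ} (h2 : ∀ u ∈ S, 2 ≤ u) :
    ∑ u ∈ S, psi ^ u = yy (∑ u ∈ S, Nat.fib u) := by
  classical
  set n := ∑ u ∈ S, Nat.fib u with hn
  have hform : ∑ u ∈ S, psi ^ u = (n : ℝ) * psi + (∑ u ∈ S, Nat.fib (u - 1) : ℕ) := by
    rw [hn]
    push_cast
    rw [Finset.sum_mul, ← Finset.sum_add_distrib]
    apply Finset.sum_congr rfl
    intro u hu
    have hu2 := h2 u hu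
    obtain ⟨e, rfl⟩ : ∃ e, u = e + 1 := ⟨u - 1, by omega⟩
    rw [psi_pow_succ]
    simp
  exact yy_unique (k := (∑ u ∈ S, Nat.fib (u - 1) : ℕ)) (by exact_mod_cast hform)
    (le_of_lt (sum_psi_lb h2)) (sum_psi_ub h2)

end PsiSum
section Shift

lemma sum_psi_form {S : Finset ℕ} (h2 : ∀ u ∈ S, 2 ≤ u) :
    ∑ u ∈ S, psi ^ u
      = ((∑ u ∈ S, Nat.fib u : ℕ) : ℝ) * psi + ((∑ u ∈ S, Nat.fib (u - 1) : ℕ) : ℝ) := by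
  push_cast
  rw [Finset.sum_mul, ← Finset.sum_add_distrib]
  apply Finset.sum_congr rfl
  intro u hu
  have hu2 := h2 u hu
  obtain ⟨e, rfl⟩ : ∃ e, u = e + 1 := ⟨u - 1, by omega⟩
  rw [psi_pow_succ]
  simp

lemma yy_L (m : ℕ) : yy (LL m) = psi * yy m := by
  refine (yy_unique (n := LL m) (m : ℤ) ?_ ?_ ?_).symm
  · rw [LL_cast]
    push_cast
    linear_combination (-(m:ℝ)) * phi_mul_psi
  · have h1 : psi * (-psi) < psi * yy m := mul_lt_mul_of_neg_left (yy_mem m).2 psi_neg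
    nlinarith
  · have h2 : psi * yy m ≤ psi * (-psi ^ 2) :=
      mul_le_mul_of_nonpos_left (yy_mem m).1 (le_of_lt psi_neg)
    nlinarith [psi_cube, psi_ub, psi_lb]

lemma img_sub_ge {S : Finset ℕ} (h3 : ∀ u ∈ S, 3 ≤ u) :
    ∀ v ∈ S.image (fun u => u - 1), 2 ≤ v := by
  intro v hv
  obtain ⟨u, hu, rfl⟩ := Finset.mem_image.mp hv
  have := h3 u hu
  omega

lemma img_sub_sum {S : Finset ℕ} (h3 : ∀ u ∈ S, 3 ≤ u) :
    ∑ v ∈ S.image (fun u => u - 1), Nat.fib v = ∑ u ∈ S, Nat.fib (u - 1) :=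
  Finset.sum_image (fun a ha b hb hab => by have := h3 a ha; have := h3 b hb; omega)

/-- Key: a representation of LL m with indices ≥ 3 down-shifts to a representation of m. -/
lemma down_shift_sum {S : Finset ℕ} {m : ℕ} (h3 : ∀ u ∈ S, 3 ≤ u)
    (hsum : ∑ u ∈ S, Nat.fib u = LL m) : ∑ u ∈ S, Nat.fib (u - 1) = m := by
  have h2 : ∀ u ∈ S, 2 ≤ u := fun u hu => by have := h3 u hu; omega
  have hpsi := sum_psi_eq h2
  rw [hsum] at hpsi
  have hform := sum_psi_form h2
  rw [hsum, hpsi, yy_L] at hform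
  have hreal : ((∑ u ∈ S, Nat.fib (u - 1) : ℕ) : ℝ) = (m : ℝ) := by
    have hc := LL_cast m
    have : psi * yy m = ((LL m : ℕ) : ℝ) * psi + ((∑ u ∈ S, Nat.fib (u - 1) : ℕ) : ℝ) := hform
    rw [hc] at this
    linear_combination (-1 : ℝ) * this - (m : ℝ) * phi_mul_psi
  exact_mod_cast hreal

/-- Key: a representation of m up-shifts to a representation of LL m. -/
lemma up_shift_sum {S : Finset ℕ} {m : ℕ} (h2 : ∀ u ∈ S, 2 ≤ u)
    (hsum : ∑ u ∈ S, Nat.fib u = m) : ∑ u ∈ S, Nat.fib (u + 1) = LL m := by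
  have hpsi := sum_psi_eq h2
  rw [hsum] at hpsi
  have hreal : ((∑ u ∈ S, Nat.fib (u + 1) : ℕ) : ℝ) = ((LL m : ℕ) : ℝ) := by
    push_cast
    have : ∀ u ∈ S, (Nat.fib (u + 1) : ℝ) = phi * Nat.fib u + psi ^ u :=
      fun u _ => fib_succ_real u
    rw [Finset.sum_congr rfl this, Finset.sum_add_distrib, ← Finset.mul_sum, LL_cast, ← hpsi]
    rw [← hsum]
    push_cast
    ring
  exact_mod_cast hreal

lemma Rc3_L (m : ℕ) : Rc 3 (LL m) = Rc 2 m := by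
  rw [Rc, Rc]
  apply Nat.card_congr
  exact {
    toFun := fun S => ⟨S.1.image (fun u => u - 1), img_sub_ge S.2.1, by
      rw [img_sub_sum S.2.1]; exact down_shift_sum S.2.1 S.2.2⟩
    invFun := fun S => ⟨S.1.image (fun u => u + 1), by
        intro v hv
        obtain ⟨u, hu, rfl⟩ := Finset.mem_image.mp hv
        have := S.2.1 u hu; omega, by
      rw [Finset.sum_image (fun a _ b _ hab => by omega)]
      exact up_shift_sum S.2.1 S.2.2⟩
    left_inv := by
      rintro ⟨S, hS⟩
      apply Subtype.ext
      show (S.image (fun u => u - 1)).image (fun u => u + 1) = S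
      rw [Finset.image_image]
      rw [Finset.image_congr (g := id) (fun u hu => by
        have := hS.1 u hu; simp only [Function.comp_apply, id_eq]; omega)]
      exact Finset.image_id
    right_inv := by
      rintro ⟨S, hS⟩
      apply Subtype.ext
      show (S.image (fun u => u + 1)).image (fun u => u - 1) = S
      rw [Finset.image_image]
      rw [Finset.image_congr (g := id) (fun u hu => by
        simp only [Function.comp_apply, id_eq]; omega)]
      exact Finset.image_id
  }

lemma Rc3_zero {j : ℕ} (hj : ∀ m, LL m ≠ j) : Rc 3 j = 0 := by
  rw [Rc, Nat.card_eq_zero]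
  left
  constructor
  rintro ⟨S, hS3, hSsum⟩
  set m := ∑ u ∈ S, Nat.fib (u - 1) with hm
  apply hj m
  have h2 : ∀ u ∈ S, 2 ≤ u := fun u hu => by have := hS3 u hu; omega
  have hS' : ∀ v ∈ S.image (fun u => u - 1), 2 ≤ v := img_sub_ge hS3
  have hsum' : ∑ v ∈ S.image (fun u => u - 1), Nat.fib v = m := img_sub_sum hS3
  have hpsi' := sum_psi_eq hS'
  rw [hsum'] at hpsi'
  have himg : ∑ v ∈ S.image (fun u => u - 1), psi ^ v = ∑ u ∈ S, psi ^ (u - 1) :=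
    Finset.sum_image (fun a ha b hb hab => by have := hS3 a ha; have := hS3 b hb; omega)
  have hform' := sum_psi_form hS'
  rw [hsum', hpsi'] at hform'
  -- (LL m : ℝ) = φ m + yy m = Σ fib u = j
  have hreal : ((LL m : ℕ) : ℝ) = (j : ℝ) := by
    rw [LL_cast]
    have hterm : ∀ u ∈ S, (Nat.fib u : ℝ) = phi * Nat.fib (u - 1) + psi ^ (u - 1) := by
      intro u hu
      have hu3 := hS3 u hu
      obtain ⟨e, rfl⟩ : ∃ e, u = e + 1 := ⟨u - 1, by omega⟩
      simpa using fib_succ_real e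
    have : (j : ℝ) = ∑ u ∈ S, (Nat.fib u : ℝ) := by rw [← hSsum]; push_cast; ring
    rw [this, Finset.sum_congr rfl hterm, Finset.sum_add_distrib, ← Finset.mul_sum]
    rw [← himg, hpsi']
    congr 1
    rw [← hsum']
    push_cast [img_sub_sum hS3]
    ring
  exact_mod_cast hreal

end Shift
section Flemmas

lemma LL_ge_two {m : ℕ} (hm : 1 ≤ m) : 2 ≤ LL m := by
  have h := LL_cast m
  have h1 : (1:ℝ) ≤ (m:ℝ) := by exact_mod_cast hm
  have h2 := yy_lb m
  have h3 : (1:ℝ) < ((LL m : ℕ) : ℝ) := by nlinarith [phi_eq, psi_sq, psi_ub, psi_lb]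
  have : 1 < LL m := by exact_mod_cast h3
  omega

lemma F1pos {m : ℕ} (hm : 1 ≤ m) (hy : 0 < yy m) : Rc 2 (LL m) = Rc 2 m := by
  obtain ⟨m', rfl⟩ : ∃ m', m = m' + 1 := ⟨m - 1, by omega⟩
  obtain ⟨hpred1, hpred2⟩ := yy_pred hy
  have hL' : LL (m' + 1) = LL m' + 2 := LL_succ_lt hpred2
  have hge := LL_ge_two hm
  obtain ⟨p, hp⟩ : ∃ p, LL (m' + 1) = p + 1 := ⟨LL (m' + 1) - 1, by omega⟩
  rw [hp, Rc_split, ← hp, Rc3_L]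
  have hz : Rc 3 p = 0 := by
    apply Rc3_zero
    intro m'' hp''
    rcases Nat.lt_or_ge m'' (m' + 1) with hlt | hge'
    · have : LL m'' ≤ LL m' := LL_strictMono.monotone (by omega)
      omega
    · have : LL (m' + 1) ≤ LL m'' := LL_strictMono.monotone hge'
      omega
  omega

lemma F2pos {m : ℕ} (hy : -psi ^ 3 ≤ yy m) : Rc 2 (LL m + 1) = Rc 2 (m + 1) + Rc 2 m := by
  have hL := LL_succ_ge hy
  rw [Rc_split, Rc3_L, ← hL, Rc3_L]

lemma F2neg {m : ℕ} (hy : yy m < -psi ^ 3) : Rc 2 (LL m + 1) = Rc 2 m := by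
  have hL := LL_succ_lt hy
  rw [Rc_split, Rc3_L]
  have hz : Rc 3 (LL m + 1) = 0 := by
    apply Rc3_zero
    intro m'' hp''
    rcases Nat.lt_or_ge m'' (m + 1) with hlt | hge'
    · have : LL m'' ≤ LL m := LL_strictMono.monotone (by omega)
      omega
    · have : LL (m + 1) ≤ LL m'' := LL_strictMono.monotone hge'
      omega
  omega

lemma R_pos : ∀ n, 0 < Rc 2 n := by
  intro n
  induction n using Nat.strong_induction_on with
  | _ n ih =>
    match n, ih with
    | 0, _ => rw [Rc_two_zero]; omega
    | (n + 1), ih =>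
      rcases lt_or_ge (yy (n + 1)) (-psi ^ 3) with hlt | hge
      · obtain ⟨m, hmn, hLm, _⟩ := decomp0 (by omega) hlt
        obtain ⟨p, hp⟩ : ∃ p, LL m = p + 1 := ⟨n, by omega⟩
        have h1 : Rc 2 (LL m) = Rc 3 (LL m) + Rc 3 p := by rw [hp, Rc_split]
        have h2 := Rc3_L m
        have h3 := ih m hmn
        rw [← hLm]
        omega
      · have hy0 : 0 < yy (n + 1) := by
          rcases lt_trichotomy (yy (n+1)) 0 with h | h | h
          · exfalso; nlinarith [psi_cube, psi_ub, psi_lb]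
          · exact absurd h (yy_ne_zero (by omega))
          · exact h
        obtain ⟨m, hmn, hLm, _⟩ := decomp1 (by omega) hy0
        have h1 : Rc 2 (LL m + 1) = Rc 3 (LL m + 1) + Rc 3 (LL m) := Rc_split (LL m)
        have h2 := Rc3_L m
        have h3 := ih m hmn
        rw [← hLm]
        omega

end Flemmas
section Key

lemma psi3_neg : psi ^ 3 < 0 := by nlinarith [psi_cube, psi_ub, psi_lb]
lemma psi4_pos : 0 < psi ^ 4 := by nlinarith [psi_four, psi_ub, psi_lb]
lemma psi4_lt : psi ^ 4 < -psi ^ 3 := by nlinarith [psi_four, psi_cube, psi_ub, psi_lb]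

lemma key (h : ℝ → ℝ) (hs : Staircase h) :
    ∀ n, (Rc 2 (n + 1) : ℝ) = h (yy n) * (Rc 2 n : ℝ) := by
  obtain ⟨hs1, hs2, hs3, hs4⟩ := hs
  intro n
  induction n using Nat.strong_induction_on with
  | _ n ih =>
  match n, ih with
  | 0, _ =>
    have h0 : h 0 = 1 := hs2 0 ⟨by rw [c4_eq]; linarith [psi4_pos], le_refl 0⟩
    rw [yy_zero, Rc_two_zero, Rc_two_one, h0]
    norm_num
  | (N + 1), ih =>
    set n := N + 1 with hn
    have hn1 : 1 ≤ n := by omega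
    have hylb := yy_lb n
    have hyub := (yy_mem n).2
    have hy0 := yy_ne_zero hn1
    have hyc3 := yy_ne_c3 n
    rcases lt_or_ge (yy n) (-psi ^ 4) with r1 | hge4
    · -- Region R1 : yy n ∈ (-ψ², -ψ⁴)
      have hstep := hs1 (yy n) ⟨by rw [c2_eq]; linarith, by rw [c4_eq]; exact r1⟩
      obtain ⟨m, hmn, hLm, hym⟩ := decomp0 hn1 (by linarith [psi3_neg, psi4_pos])
      have hym_pos : 0 < yy m := by
        rw [hym]
        have : 0 < -yy n := by linarith [psi4_pos]
        nlinarith [phi_pos]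
      have hym_c3 : -psi ^ 3 < yy m := by
        rw [hym]
        have := mul_lt_mul_of_pos_left r1 phi_pos
        nlinarith [id3]
      have hm1 : 1 ≤ m := by
        rcases Nat.eq_zero_or_pos m with h0 | h0
        · exfalso; rw [h0, yy_zero] at hym_pos; linarith
        · omega
      have hRn : Rc 2 n = Rc 2 m := by rw [← hLm]; exact F1pos hm1 hym_pos
      have hRn1 : Rc 2 (n + 1) = Rc 2 (m + 1) + Rc 2 m := by
        rw [← hLm]; exact F2pos (le_of_lt hym_c3)
      have hih := ih m hmn
      rw [hstep, hRn, hRn1, ← hym]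
      push_cast
      linear_combination hih
    · rcases lt_or_ge (yy n) 0 with r2 | hge0
      · -- Region R2 : yy n ∈ [-ψ⁴, 0)
        have hstep := hs2 (yy n) ⟨by rw [c4_eq]; linarith, le_of_lt r2⟩
        obtain ⟨m, hmn, hLm, hym⟩ := decomp0 hn1 (by linarith [psi3_neg])
        have hym_pos : 0 < yy m := by
          rw [hym]; nlinarith [phi_pos]
        have hym_c3 : yy m < -psi ^ 3 := by
          rcases lt_or_ge (yy m) (-psi ^ 3) with hh | hh
          · exact hh
          · exfalso
            rcases lt_or_eq_of_le hh with hh' | hh'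
            · rw [hym] at hh'
              have := mul_le_mul_of_nonneg_left hge4 (le_of_lt phi_pos)
              nlinarith [id3]
            · exact yy_ne_c3 m hh'.symm
        have hm1 : 1 ≤ m := by
          rcases Nat.eq_zero_or_pos m with h0 | h0
          · exfalso; rw [h0, yy_zero] at hym_pos; linarith
          · omega
        have hRn : Rc 2 n = Rc 2 m := by rw [← hLm]; exact F1pos hm1 hym_pos
        have hRn1 : Rc 2 (n + 1) = Rc 2 m := by rw [← hLm]; exact F2neg hym_c3
        rw [hstep, hRn, hRn1]
        ring
      · have hypos : 0 < yy n := lt_of_le_of_ne hge0 (Ne.symm hy0)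
        obtain ⟨m, hmn, hLm, hym⟩ := decomp1 hn1 hypos
        have hihm := ih m hmn
        have hRm_pos : (0:ℝ) < (Rc 2 m : ℝ) := by exact_mod_cast R_pos m
        have hRm1_pos : (0:ℝ) < (Rc 2 (m+1) : ℝ) := by exact_mod_cast R_pos (m+1)
        have hhm : h (yy m) = (Rc 2 (m+1) : ℝ) / (Rc 2 m : ℝ) := by
          field_simp
          linarith [hihm]
        rcases lt_or_ge (yy n) (-psi ^ 3) with r3 | r4
        · -- Region R3 : yy n ∈ (0, -ψ³)
          have hstep := (hs3 (yy n) ⟨hypos, by rw [c3_eq]; exact r3⟩).2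
          have hz : -phi * yy n + 1 / phi = yy m := by rw [c1_eq, hym]; ring
          have hym_gt : -psi ^ 3 < yy m := by
            rw [hym]
            have := mul_lt_mul_of_pos_left r3 phi_pos
            nlinarith [id2, psi_cube, psi_sq]
          have hRn : Rc 2 n = Rc 2 (m + 1) + Rc 2 m := by
            rw [← hLm]; exact F2pos (le_of_lt hym_gt)
          have hLs : LL (m + 1) = LL m + 1 := LL_succ_ge (le_of_lt hym_gt)
          have hym1 : yy (m + 1) = yy m + psi := yy_succ_ge (le_of_lt hym_gt)
          have hym1_lt : yy (m + 1) < -psi ^ 3 := by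
            rw [hym1]
            have := (yy_mem m).2
            nlinarith [psi3_neg]
          have hRn1 : Rc 2 (n + 1) = Rc 2 (m + 1) := by
            rw [show n + 1 = LL (m + 1) + 1 by omega]
            exact F2neg hym1_lt
          rw [hstep, hz, hRn, hRn1, hhm]
          push_cast
          set a := (Rc 2 m : ℝ) with hadef
          set b := (Rc 2 (m+1) : ℝ) with hbdef
          have ha : a ≠ 0 := ne_of_gt hRm_pos
          have hab : a + b ≠ 0 := by positivity
          have e1 : 1 + b / a = (a + b) / a := by rw [add_div, div_self ha]
          have e2 : b / a / ((a + b) / a) = b / (a + b) := by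
            rw [div_div_eq_mul_div, div_mul_cancel₀ b ha]
          rw [e1, e2, add_comm b a, div_mul_cancel₀ b hab]
        · -- Region R4 : yy n ∈ (-ψ³, -ψ)
          have hr4 : -psi ^ 3 < yy n := lt_of_le_of_ne r4 (Ne.symm hyc3)
          have hstep := hs4 (yy n) ⟨by rw [c3_eq]; exact hr4, by rw [c1_eq]; exact hyub⟩
          have hz : -phi * yy n + 1 / phi = yy m := by rw [c1_eq, hym]; ring
          have hym_lt : yy m < -psi ^ 3 := by
            rw [hym]
            have := mul_lt_mul_of_pos_left hr4 phi_pos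
            nlinarith [id2, psi_cube, psi_sq]
          have hRn : Rc 2 n = Rc 2 m := by rw [← hLm]; exact F2neg hym_lt
          have hLs : LL (m + 1) = LL m + 2 := LL_succ_lt hym_lt
          have hym1 : yy (m + 1) = yy m + psi ^ 2 := yy_succ_lt hym_lt
          have hym1_pos : 0 < yy (m + 1) := by
            rw [hym1]
            linarith [yy_lb m]
          have hRn1 : Rc 2 (n + 1) = Rc 2 (m + 1) := by
            rw [show n + 1 = LL (m + 1) by omega]
            exact F1pos (by omega) hym1_pos
          rw [hstep, hz, hRn, hRn1]
          exact hihm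

end Key
section Final

lemma T_iter : ∀ k : ℕ, T^[k] (0 : ℝ) = yy k := by
  intro k
  induction k with
  | zero => simp [yy_zero]
  | succ k ih =>
    rw [Function.iterate_succ_apply', ih]
    unfold T
    by_cases hcase : yy k < 1 / phi ^ 3
    · rw [if_pos hcase, c2_eq]
      exact (yy_succ_lt (by rw [← c3_eq]; exact hcase)).symm
    · rw [if_neg hcase, c2_eq]
      have h1 : -psi ^ 3 ≤ yy k := by rw [← c3_eq]; exact le_of_not_gt hcase
      rw [yy_succ_ge h1, psi_sq]
      ring

lemma yy_mem_D (k : ℕ) : yy k ∈ D := by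
  have h1 := yy_lb k
  have h2 := (yy_mem k).2
  have h3 := yy_ne_c3 k
  rcases lt_or_ge (yy k) (-psi ^ 3) with hc | hc
  · left
    exact ⟨by rw [c2_eq]; linarith, by rw [c3_eq]; exact hc⟩
  · right
    have : -psi ^ 3 < yy k := lt_of_le_of_ne hc (Ne.symm h3)
    exact ⟨by rw [c3_eq]; exact this, by rw [c1_eq]; exact h2⟩

end Final

theorem aux_stmt_13 (h : ℝ → ℝ) (hc : ContinuousOn h D) (hs : Staircase h) :
    (∀ k : ℕ, T^[k] 0 ∈ D) ∧
    ∀ n : ℕ, 1 ≤ n →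
      (R n : ℝ) = ∏ k ∈ Finset.range n, h (T^[k] 0) ∧
      (R n : ℝ) = Real.exp (∑ k ∈ Finset.range n, Real.log (h (T^[k] 0))) := by
  have hkey := key h hs
  constructor
  · intro k
    rw [T_iter k]
    exact yy_mem_D k
  · intro n hn
    have hprod : ∀ N : ℕ, (Rc 2 N : ℝ) = ∏ k ∈ Finset.range N, h (yy k) := by
      intro N
      induction N with
      | zero => rw [Rc_two_zero]; simp
      | succ N ihN =>
        rw [Finset.prod_range_succ, ← ihN, hkey N]
        ring
    have hpos : ∀ k : ℕ, 0 < h (yy k) := by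
      intro k
      have h1 : (0:ℝ) < (Rc 2 k : ℝ) := by exact_mod_cast R_pos k
      have h2 : (0:ℝ) < (Rc 2 (k+1) : ℝ) := by exact_mod_cast R_pos (k+1)
      have h3 := hkey k
      have hh : h (yy k) = (Rc 2 (k+1) : ℝ) / (Rc 2 k : ℝ) := by
        field_simp
        linarith [h3]
      rw [hh]
      positivity
    have hmain : (R n : ℝ) = ∏ k ∈ Finset.range n, h (T^[k] 0) := by
      rw [R_eq_Rc, hprod n]
      apply Finset.prod_congr rfl
      intro k _
      rw [T_iter k]
    refine ⟨hmain, ?_⟩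
    rw [hmain, Real.exp_sum]
    apply Finset.prod_congr rfl
    intro k _
    rw [T_iter k, Real.exp_log (hpos k)]

/-- if h is continuous on D and satisfies the staircase equation, then all
iterates T^k(0) lie in D and, for every n ≥ 1,
R(n) = ∏_{k=0}^{n−1} h(T^k(0)) = exp(∑_{k=0}^{n−1} log h(T^k(0))). -/
theorem stmt_13 (h : ℝ → ℝ) (hc : ContinuousOn h D) (hs : Staircase h) :
    (∀ k : ℕ, T^[k] 0 ∈ D) ∧
    ∀ n : ℕ, 1 ≤ n →
      (R n : ℝ) = ∏ k ∈ Finset.range n, h (T^[k] 0) ∧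
      (R n : ℝ) = Real.exp (∑ k ∈ Finset.range n, Real.log (h (T^[k] 0))) := by
  exact aux_stmt_13 h hc hs

end
end

section
/- For every n ∈ ℕ, R(n) = R(n+1) if and only if T^n(0) ∈ [−1/φ⁴, 0] ∪ [1/φ², 1/φ² + 1/φ⁵]. -/
open Real Finset

noncomputable section

lemma sqrt5_sq : Real.sqrt 5 ^ 2 = 5 := Real.sq_sqrt (by norm_num)
lemma sqrt5_gt : 2.236 < Real.sqrt 5 := by
  nlinarith [sqrt5_sq, Real.sqrt_nonneg 5]
lemma sqrt5_lt : Real.sqrt 5 < 2.2361 := by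
  nlinarith [sqrt5_sq, Real.sqrt_nonneg 5]
lemma phi_sq : phi ^ 2 = phi + 1 := by
  unfold phi; nlinarith [sqrt5_sq]
lemma phi_gt : 1.618 < phi := by unfold phi; nlinarith [sqrt5_gt]
lemma phi_lt : phi < 1.61806 := by unfold phi; nlinarith [sqrt5_lt]
lemma psi_eq : psi = 1 - phi := by unfold psi phi; ring
lemma inv_phi2 : 1 / phi ^ 2 = 2 - phi := by
  rw [phi_sq]; rw [div_eq_iff (by nlinarith [phi_gt])]; nlinarith [phi_sq]
lemma inv_phi3 : 1 / phi ^ 3 = 2 * phi - 3 := by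
  have h : phi ^ 3 = 2 * phi + 1 := by nlinarith [phi_sq]
  rw [h]; rw [div_eq_iff (by nlinarith [phi_gt])]; nlinarith [phi_sq]
lemma inv_phi4 : 1 / phi ^ 4 = 5 - 3 * phi := by
  have h : phi ^ 4 = 3 * phi + 2 := by nlinarith [phi_sq]
  rw [h]; rw [div_eq_iff (by nlinarith [phi_gt])]; nlinarith [phi_sq]
lemma inv_phi5 : 1 / phi ^ 5 = 5 * phi - 8 := by
  have h4 : phi ^ 4 = 3 * phi + 2 := by nlinarith [phi_sq]
  have h : phi ^ 5 = 5 * phi + 3 := by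
    have : phi ^ 5 = phi ^ 4 * phi := by ring
    rw [this, h4]; nlinarith [phi_sq]
  rw [h]; rw [div_eq_iff (by nlinarith [phi_gt])]; nlinarith [phi_sq]

def y (n : ℕ) : ℝ := T^[n] 0

lemma y_zero : y 0 = 0 := rfl
lemma y_succ (n : ℕ) : y (n + 1) = T (y n) := Function.iterate_succ_apply' T n 0

lemma T_lo {x : ℝ} (h : x < 2 * phi - 3) : T x = x + (2 - phi) := by
  unfold T; rw [inv_phi3, inv_phi2]; rw [if_pos h]
lemma T_hi {x : ℝ} (h : ¬ x < 2 * phi - 3) : T x = x + (1 - phi) := by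
  unfold T; rw [inv_phi3, inv_phi2]; rw [if_neg h]; ring

lemma y_mem (n : ℕ) : phi - 2 ≤ y n ∧ y n < phi - 1 := by
  induction n with
  | zero => constructor <;> [skip; skip] <;> simp [y_zero] <;> nlinarith [phi_gt, phi_lt]
  | succ n ih =>
    rw [y_succ]
    by_cases h : y n < 2 * phi - 3
    · rw [T_lo h]; constructor <;> nlinarith [ih.1, ih.2, phi_gt, phi_lt]
    · rw [T_hi h]; push_neg at h; constructor <;> nlinarith [ih.1, ih.2, phi_gt, phi_lt]

lemma y_mod (n : ℕ) : ∃ z : ℤ, y n = n * psi + z := by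
  induction n with
  | zero => exact ⟨0, by simp [y_zero]⟩
  | succ n ih =>
    obtain ⟨z, hz⟩ := ih
    rw [y_succ]
    by_cases h : y n < 2 * phi - 3
    · exact ⟨z + 1, by rw [T_lo h, hz, psi_eq]; push_cast; ring⟩
    · exact ⟨z, by rw [T_hi h, hz, psi_eq]; push_cast; ring⟩
lemma upos : (0:ℝ) < phi - 1 := by nlinarith [phi_gt]
lemma ult1 : phi - 1 < 1 := by nlinarith [phi_lt]
lemma u_id : (phi - 1) + (phi - 1) ^ 2 = 1 := by nlinarith [phi_sq]
lemma psi_eq' : psi = -(phi - 1) := by rw [psi_eq]; ring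

lemma psipow (i : ℕ) : psi ^ (i + 1) = (Nat.fib (i+1) : ℝ) * psi + Nat.fib i := by
  induction i with
  | zero => simp
  | succ n ih =>
    have : psi ^ (n + 2) = psi ^ (n+1) * psi := by ring
    rw [this, ih]
    have hps : psi ^ 2 = psi + 1 := by unfold psi; nlinarith [sqrt5_sq]
    have : (Nat.fib (n+1) : ℝ) * psi * psi = (Nat.fib (n+1) : ℝ) * (psi + 1) := by
      nlinarith [hps]
    rw [Nat.fib_add_two]
    push_cast
    nlinarith [hps]

-- geometric-type bounds for sums of psi powers over finsets with min ≥ a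
lemma bnd : ∀ (N : ℕ) (S : Finset ℕ) (a : ℕ), S.card ≤ N → 1 ≤ a → (∀ i ∈ S, a ≤ i) →
    (Even a → (-((phi-1) ^ a) < ∑ i ∈ S, psi ^ i ∧ ∑ i ∈ S, psi ^ i < (phi-1) ^ (a-1))) ∧
    (¬ Even a → (-((phi-1) ^ (a-1)) < ∑ i ∈ S, psi ^ i ∧ ∑ i ∈ S, psi ^ i < (phi-1) ^ a)) := by
  intro N
  induction N with
  | zero =>
    intro S a hc ha hmin
    have : S = ∅ := Finset.card_eq_zero.mp (Nat.le_zero.mp hc)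
    subst this
    simp only [Finset.sum_empty]
    have h1 : (0:ℝ) < (phi-1) ^ a := pow_pos upos a
    have h2 : (0:ℝ) < (phi-1) ^ (a-1) := pow_pos upos _
    exact ⟨fun _ => ⟨by linarith, by linarith⟩, fun _ => ⟨by linarith, by linarith⟩⟩
  | succ N ih =>
    intro S a hc ha hmin
    rcases Finset.eq_empty_or_nonempty S with rfl | hS
    · simp only [Finset.sum_empty]
      have h1 : (0:ℝ) < (phi-1) ^ a := pow_pos upos a
      have h2 : (0:ℝ) < (phi-1) ^ (a-1) := pow_pos upos _
      exact ⟨fun _ => ⟨by linarith, by linarith⟩, fun _ => ⟨by linarith, by linarith⟩⟩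
    · set b := S.min' hS with hb
      have hbS : b ∈ S := S.min'_mem hS
      have hab : a ≤ b := hmin b hbS
      have hS' : ∀ i ∈ S.erase b, b + 1 ≤ i := by
        intro i hi
        have h1 := S.min'_le i (Finset.mem_of_mem_erase hi)
        have h2 := Finset.ne_of_mem_erase hi
        omega
      have hc' : (S.erase b).card ≤ N := by
        have := Finset.card_erase_of_mem hbS
        omega
      have IH := ih (S.erase b) (b+1) hc' (by omega) hS'
      have hsum : ∑ i ∈ S, psi ^ i = psi ^ b + ∑ i ∈ S.erase b, psi ^ i :=
        (Finset.add_sum_erase S _ hbS).symm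
      have hb1 : 1 ≤ b := le_trans ha hab
      -- key identity: u^b + u^(b+1) = u^(b-1)
      have hkey : (phi-1)^b + (phi-1)^(b+1) = (phi-1)^(b-1) := by
        have hb' : b - 1 + 1 = b := by omega
        have e1 : (phi-1)^b = (phi-1)^(b-1) * (phi-1) := by
          rw [← pow_succ, hb']
        have e2 : (phi-1)^(b+1) = (phi-1)^(b-1) * (phi-1)^2 := by
          rw [← pow_add]; congr 1; omega
        rw [e1, e2, ← mul_add, u_id, mul_one]
      have hmono : ∀ m n : ℕ, m ≤ n → (phi-1)^n ≤ (phi-1)^m := fun m n h =>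
        pow_le_pow_of_le_one (le_of_lt upos) (le_of_lt ult1) h
      rcases Nat.even_or_odd b with hbe | hbo
      · -- b even: psi^b = u^b, Σ' ∈ (-(u^b), u^(b+1)) from odd case at b+1
        have hodd : ¬ Even (b+1) := by simp [Nat.even_add_one, hbe]
        obtain ⟨l, r⟩ := IH.2 hodd
        have hpb : psi ^ b = (phi-1)^b := by
          rw [psi_eq']; exact (hbe.neg_pow _)
        simp only [Nat.add_sub_cancel] at l r
        have hlo : 0 < ∑ i ∈ S, psi ^ i := by rw [hsum, hpb]; linarith
        have hhi : ∑ i ∈ S, psi ^ i < (phi-1)^(b-1) := by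
          rw [hsum, hpb]; linarith [hkey]
        constructor
        · intro hae
          refine ⟨lt_of_lt_of_le (neg_neg_of_pos (pow_pos upos a)) (le_of_lt hlo), ?_⟩
          exact lt_of_lt_of_le hhi (hmono _ _ (by omega))
        · intro hao
          have hne : a ≠ b := by rintro rfl; exact hao hbe
          refine ⟨lt_of_lt_of_le (neg_neg_of_pos (pow_pos upos _)) (le_of_lt hlo), ?_⟩
          exact lt_of_lt_of_le hhi (hmono _ _ (by omega))
      · -- b odd
        have heven : Even (b+1) := Nat.even_add_one.mpr (Nat.not_even_iff_odd.mpr hbo)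
        obtain ⟨l, r⟩ := IH.1 heven
        have hpb : psi ^ b = -((phi-1)^b) := by
          rw [psi_eq']; exact (hbo.neg_pow _)
        simp only [Nat.add_sub_cancel] at l r
        have hhi : ∑ i ∈ S, psi ^ i < 0 := by rw [hsum, hpb]; linarith
        have hlo : -((phi-1)^(b-1)) < ∑ i ∈ S, psi ^ i := by
          rw [hsum, hpb]; linarith [hkey]
        constructor
        · intro hae
          have hne : a ≠ b := by rintro rfl; exact (Nat.not_odd_iff_even.mpr hae) hbo
          refine ⟨?_, lt_of_lt_of_le hhi (le_of_lt (pow_pos upos _))⟩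
          have : (phi-1)^(b-1) ≤ (phi-1)^a := hmono _ _ (by omega)
          linarith
        · intro hao
          refine ⟨?_, lt_of_lt_of_le hhi (le_of_lt (pow_pos upos _))⟩
          have : (phi-1)^(b-1) ≤ (phi-1)^(a-1) := hmono _ _ (by omega)
          linarith

-- sign of a nonempty sum, by parity of the minimum
lemma sum_sign (S : Finset ℕ) (hS : S.Nonempty) (h2 : ∀ i ∈ S, 1 ≤ i) :
    (Even (S.min' hS) → 0 < ∑ i ∈ S, psi ^ i) ∧ (¬ Even (S.min' hS) → ∑ i ∈ S, psi ^ i < 0) := by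
  set b := S.min' hS with hb
  have hbS : b ∈ S := S.min'_mem hS
  have hS' : ∀ i ∈ S.erase b, b + 1 ≤ i := by
    intro i hi
    have h1 := S.min'_le i (Finset.mem_of_mem_erase hi)
    have h2 := Finset.ne_of_mem_erase hi
    omega
  have IH := bnd (S.erase b).card (S.erase b) (b+1) le_rfl (by omega) hS'
  have hsum : ∑ i ∈ S, psi ^ i = psi ^ b + ∑ i ∈ S.erase b, psi ^ i :=
    (Finset.add_sum_erase S _ hbS).symm
  constructor
  · intro hbe
    have hodd : ¬ Even (b+1) := by simp [Nat.even_add_one, hbe]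
    obtain ⟨l, r⟩ := IH.2 hodd
    simp only [Nat.add_sub_cancel] at l r
    have hpb : psi ^ b = (phi-1)^b := by rw [psi_eq']; exact (hbe.neg_pow _)
    rw [hsum, hpb]; linarith
  · intro hbo
    have hbo' : Odd b := Nat.not_even_iff_odd.mp hbo
    have heven : Even (b+1) := Nat.even_add_one.mpr hbo
    obtain ⟨l, r⟩ := IH.1 heven
    simp only [Nat.add_sub_cancel] at l r
    have hpb : psi ^ b = -((phi-1)^b) := by rw [psi_eq']; exact (hbo'.neg_pow _)
    rw [hsum, hpb]; linarith
-- ===== new part =====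

lemma int_eq_of_abs_lt {a b : ℝ} (z : ℤ) (hz : a - b = z) (h1 : a - b < 1) (h2 : -1 < a - b) :
    a = b := by
  have hz1 : (z:ℝ) < 1 := by rw [← hz]; exact h1
  have hz2 : (-1:ℝ) < z := by rw [← hz]; exact h2
  have hz1' : z < 1 := by exact_mod_cast hz1
  have hz2' : -1 < z := by exact_mod_cast hz2
  have : z = 0 := by omega
  rw [this] at hz; push_cast at hz; linarith

-- ψ-value of any representation equals y m
lemma rep_psi_sum {S : Finset ℕ} {m : ℕ} (h2 : ∀ i ∈ S, 2 ≤ i)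
    (hsum : ∑ i ∈ S, Nat.fib i = m) : ∑ i ∈ S, psi ^ i = y m := by
  -- pointwise identity
  have hpt : ∀ i ∈ S, psi ^ i = (Nat.fib i : ℝ) * psi + Nat.fib (i-1) := by
    intro i hi
    have h1 : 1 ≤ i := le_trans (by norm_num) (h2 i hi)
    obtain ⟨j, rfl⟩ : ∃ j, i = j + 1 := ⟨i - 1, by omega⟩
    simpa using psipow j
  have hsum2 : ∑ i ∈ S, psi ^ i = (m:ℝ) * psi + (∑ i ∈ S, Nat.fib (i-1) : ℕ) := by
    rw [Finset.sum_congr rfl hpt, Finset.sum_add_distrib, ← Finset.sum_mul, ← hsum]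
    push_cast
    ring
  obtain ⟨z, hz⟩ := y_mod m
  set x := ∑ i ∈ S, psi ^ i
  have hdiff : x - y m = ((∑ i ∈ S, Nat.fib (i-1) : ℕ) - z : ℤ) := by
    rw [hsum2, hz]; push_cast; ring
  -- bounds on x from bnd with a = 2
  have hb := (bnd S.card S 2 le_rfl (by norm_num) h2).1 (by norm_num)
  have hx1 : -((phi-1)^2) < x := hb.1
  have hx2 : x < (phi-1)^1 := by simpa using hb.2
  have hy1 := (y_mem m).1
  have hy2 := (y_mem m).2
  have e1 : (phi-1)^2 = phi^2 - 2*phi + 1 := by ring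
  have e2 : (phi-1)^1 = phi - 1 := by ring
  rw [e1] at hx1
  rw [e2] at hx2
  refine int_eq_of_abs_lt _ hdiff ?_ ?_
  · linarith [phi_sq, phi_gt]
  · linarith [phi_sq, phi_gt]

-- shifted fib sum
lemma rep_fib_pred_sum {S : Finset ℕ} {m : ℕ} (h2 : ∀ i ∈ S, 2 ≤ i)
    (hsum : ∑ i ∈ S, Nat.fib i = m) :
    ((∑ i ∈ S, Nat.fib (i-1) : ℕ) : ℝ) = y m - m * psi := by
  have hpt : ∀ i ∈ S, psi ^ i = (Nat.fib i : ℝ) * psi + Nat.fib (i-1) := by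
    intro i hi
    have h1 : 1 ≤ i := le_trans (by norm_num) (h2 i hi)
    obtain ⟨j, rfl⟩ : ∃ j, i = j + 1 := ⟨i - 1, by omega⟩
    simpa using psipow j
  have hsum2 : ∑ i ∈ S, psi ^ i = (m:ℝ) * psi + (∑ i ∈ S, Nat.fib (i-1) : ℕ) := by
    rw [Finset.sum_congr rfl hpt, Finset.sum_add_distrib, ← Finset.sum_mul, ← hsum]
    push_cast
    ring
  have := rep_psi_sum h2 hsum
  rw [this] at hsum2
  linarith [hsum2]

lemma le_fib_add_two : ∀ i : ℕ, i ≤ Nat.fib i + 2 := by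
  intro i
  induction i using Nat.strong_induction_on with
  | _ i ih =>
    match i with
    | 0 => simp
    | 1 => simp
    | 2 => simp
    | 3 => norm_num
    | (n+4) =>
      have h1 := ih (n+3) (by omega)
      have h2 : 1 ≤ Nat.fib (n+3) := Nat.fib_pos.mpr (by omega)
      have h3 : Nat.fib (n+4) = Nat.fib (n+2) + Nat.fib (n+3) := Nat.fib_add_two
      have h4 : Nat.fib (n+3) = Nat.fib (n+1) + Nat.fib (n+2) := Nat.fib_add_two
      have h5 : 1 ≤ Nat.fib (n+2) := Nat.fib_pos.mpr (by omega)
      omega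

-- finiteness
lemma reps_finite (c m : ℕ) : {S : Finset ℕ | (∀ i ∈ S, c ≤ i) ∧ ∑ i ∈ S, Nat.fib i = m}.Finite := by
  apply Set.Finite.subset (Finset.finite_toSet ((Finset.range (m+3)).powerset))
  intro S hS
  simp only [Set.mem_setOf_eq] at hS
  rw [Finset.mem_coe, Finset.mem_powerset]
  intro i hi
  rw [Finset.mem_range]
  have h1 : Nat.fib i ≤ m := by
    rw [← hS.2]
    exact Finset.single_le_sum (fun j _ => Nat.zero_le _) hi
  have := le_fib_add_two i
  omega

instance reps_finite' (m : ℕ) : Finite {S : Finset ℕ // (∀ i ∈ S, 2 ≤ i) ∧ ∑ i ∈ S, Nat.fib i = m} :=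
  (reps_finite 2 m).to_subtype

instance reps_finite3 (m : ℕ) : Finite {S : Finset ℕ // (∀ i ∈ S, 3 ≤ i) ∧ ∑ i ∈ S, Nat.fib i = m} :=
  (reps_finite 3 m).to_subtype

-- Zeckendorf existence (greedy)
lemma exists_fib_between (m : ℕ) (hm : 1 ≤ m) : ∃ k, 2 ≤ k ∧ Nat.fib k ≤ m ∧ m < Nat.fib (k+1) := by
  have hex : ∃ j, m < Nat.fib (j + 3) := by
    refine ⟨m, ?_⟩
    have := le_fib_add_two (m + 3)
    have h2 : Nat.fib (m+3) = Nat.fib (m+1) + Nat.fib (m+2) := Nat.fib_add_two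
    have h3 : 1 ≤ Nat.fib (m+1) := Nat.fib_pos.mpr (by omega)
    have h4 : m + 1 ≤ Nat.fib (m+1) + 2 := le_fib_add_two (m+1)
    omega
  classical
  have hj : m < Nat.fib (Nat.find hex + 3) := Nat.find_spec hex
  rcases Nat.eq_zero_or_pos (Nat.find hex) with h0 | hpos
  · rw [h0] at hj
    refine ⟨2, le_rfl, ?_, ?_⟩
    · have : Nat.fib 2 = 1 := rfl
      omega
    · exact hj
  · obtain ⟨i, hi⟩ := Nat.exists_eq_add_of_le hpos
    have hmin := Nat.find_min hex (show i < Nat.find hex by omega)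
    push_neg at hmin
    refine ⟨i + 3, by omega, hmin, ?_⟩
    have e : i + 3 + 1 = Nat.find hex + 3 := by omega
    rw [e]
    exact hj

lemma zeck_exists : ∀ m : ℕ, ∃ S : Finset ℕ, (∀ i ∈ S, 2 ≤ i) ∧ (∑ i ∈ S, Nat.fib i = m) ∧
    (∀ i ∈ S, i + 1 ∉ S) ∧ (∀ i ∈ S, Nat.fib i ≤ m) := by
  intro m
  induction m using Nat.strong_induction_on with
  | _ m ih =>
    rcases Nat.eq_zero_or_pos m with rfl | hm
    · exact ⟨∅, by simp⟩
    obtain ⟨k, hk2, hk1, hk3⟩ := exists_fib_between m hm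
    have hfibk : 1 ≤ Nat.fib k := Nat.fib_pos.mpr (by omega)
    set s := m - Nat.fib k with hs
    have hslt : s < m := by omega
    obtain ⟨S', h1, h2, h3, h4⟩ := ih s hslt
    have hsmall : s < Nat.fib (k-1) := by
      have e : k + 1 = (k-1) + 2 := by omega
      have e2 : k = (k-1) + 1 := by omega
      have : Nat.fib (k+1) = Nat.fib (k-1) + Nat.fib k := by
        conv_lhs => rw [e]
        rw [Nat.fib_add_two, ← e2]
      omega
    have hbound : ∀ i ∈ S', i ≤ k - 2 := by
      intro i hi
      by_contra hcon
      push_neg at hcon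
      have : k - 1 ≤ i := by omega
      have := Nat.fib_mono this
      have := h4 i hi
      omega
    have hknot : k ∉ S' := fun h => by have := hbound k h; omega
    refine ⟨insert k S', ?_, ?_, ?_, ?_⟩
    · intro i hi
      rcases Finset.mem_insert.mp hi with rfl | hi'
      · omega
      · exact h1 i hi'
    · rw [Finset.sum_insert hknot, h2]; omega
    · intro i hi
      rcases Finset.mem_insert.mp hi with rfl | hi'
      · intro hcon
        rcases Finset.mem_insert.mp hcon with h | h
        · omega
        · have := hbound _ h; omega
      · intro hcon
        rcases Finset.mem_insert.mp hcon with h | h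
        · have := hbound _ hi'; omega
        · exact h3 i hi' h
    · intro i hi
      rcases Finset.mem_insert.mp hi with rfl | hi'
      · omega
      · have := h4 i hi'; omega

lemma R_pos_s15 (m : ℕ) : 0 < R m := by
  obtain ⟨S, h1, h2, _, _⟩ := zeck_exists m
  have : Nonempty {S : Finset ℕ // (∀ i ∈ S, 2 ≤ i) ∧ ∑ i ∈ S, Nat.fib i = m} := ⟨⟨S, h1, h2⟩⟩
  exact Nat.card_pos

-- strict lower bound on y m
lemma ylb (m : ℕ) : phi - 2 < y m := by
  rcases Nat.eq_zero_or_pos m with rfl | hm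
  · have : y 0 = 0 := rfl
    rw [this]; nlinarith [phi_lt]
  obtain ⟨S, h1, h2, _, _⟩ := zeck_exists m
  have hy := rep_psi_sum h1 h2
  have hb := (bnd S.card S 2 le_rfl (by norm_num) h1).1 (by norm_num)
  have := hb.1
  rw [hy] at this
  nlinarith [phi_sq, this]

lemma y_ne_zero (m : ℕ) (hm : 1 ≤ m) : y m ≠ 0 := by
  obtain ⟨S, h1, h2, _, _⟩ := zeck_exists m
  have hy := rep_psi_sum h1 h2
  have hne : S.Nonempty := by
    rcases Finset.eq_empty_or_nonempty S with rfl | h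
    · simp at h2; omega
    · exact h
  have hs := sum_sign S hne (fun i hi => le_trans (by norm_num) (h1 i hi))
  rcases Nat.even_or_odd (S.min' hne) with he | ho
  · have := hs.1 he; rw [hy] at this; linarith
  · have := hs.2 (Nat.not_even_iff_odd.mpr ho); rw [hy] at this; linarith

-- if m has a zeck rep containing 2, then y m > 2φ-3
lemma y_big_of_two_mem {S : Finset ℕ} {m : ℕ} (h1 : ∀ i ∈ S, 2 ≤ i)
    (h2 : ∑ i ∈ S, Nat.fib i = m) (h3 : ∀ i ∈ S, i + 1 ∉ S) (hm : 2 ∈ S) :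
    2 * phi - 3 < y m := by
  have hy := rep_psi_sum h1 h2
  have hsum : ∑ i ∈ S, psi ^ i = psi ^ 2 + ∑ i ∈ S.erase 2, psi ^ i :=
    (Finset.add_sum_erase S _ hm).symm
  have hmin : ∀ i ∈ S.erase 2, 4 ≤ i := by
    intro i hi
    have hiS := Finset.mem_of_mem_erase hi
    have hne2 := Finset.ne_of_mem_erase hi
    have hne3 : i ≠ 3 := by
      rintro rfl
      exact (h3 2 hm) hiS
    have := h1 i hiS
    omega
  have hb := (bnd (S.erase 2).card (S.erase 2) 4 le_rfl (by norm_num) hmin).1 (by decide)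
  have hlow := hb.1
  have hps : psi ^ 2 = (phi - 1)^2 := by rw [psi_eq]; ring
  rw [← hy, hsum, hps]
  have hkey : (phi-1)^2 - (phi-1)^4 = 2*phi - 3 := by nlinarith [phi_sq]
  nlinarith [hlow]
-- ========== new ==========

def A (m : ℕ) : ℕ :=
  Nat.card {S : Finset ℕ // (∀ i ∈ S, 3 ≤ i) ∧ ∑ i ∈ S, Nat.fib i = m}

lemma A_eq_zero {m : ℕ} (h : 2 * phi - 3 ≤ y m) : A m = 0 := by
  by_contra hA
  obtain ⟨⟨S, h3, hsum⟩⟩ := (Nat.card_ne_zero.mp hA).1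
  have h2 : ∀ i ∈ S, 2 ≤ i := fun i hi => le_trans (by norm_num) (h3 i hi)
  have hy := rep_psi_sum h2 hsum
  have hb := (bnd S.card S 3 le_rfl (by norm_num) h3).2 (by decide)
  have := hb.2
  rw [hy] at this
  have e3 : (phi-1)^3 = 2*phi - 3 := by nlinarith [phi_sq]
  rw [e3] at this
  linarith

lemma A_pos {m : ℕ} (h : y m < 2 * phi - 3) : 0 < A m := by
  obtain ⟨S, h1, h2, h3, _⟩ := zeck_exists m
  have hS3 : ∀ i ∈ S, 3 ≤ i := by
    intro i hi
    rcases Nat.lt_or_ge i 3 with hlt | hge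
    · exfalso
      have : i = 2 := by have := h1 i hi; omega
      subst this
      have := y_big_of_two_mem h1 h2 h3 hi
      linarith
    · exact hge
  have : Nonempty {S : Finset ℕ // (∀ i ∈ S, 3 ≤ i) ∧ ∑ i ∈ S, Nat.fib i = m} := ⟨⟨S, hS3, h2⟩⟩
  exact Nat.card_pos

-- C1: R (m+1) = A (m+1) + A m
lemma R_eq_A_add_A (m : ℕ) : R (m + 1) = A (m + 1) + A m := by
  classical
  set X := {S : Finset ℕ // (∀ i ∈ S, 2 ≤ i) ∧ ∑ i ∈ S, Nat.fib i = m + 1}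
  have key : Nat.card X = A (m+1) + A m := by
    have e : X ≃ {S : Finset ℕ // (∀ i ∈ S, 3 ≤ i) ∧ ∑ i ∈ S, Nat.fib i = m + 1} ⊕
        {S : Finset ℕ // (∀ i ∈ S, 3 ≤ i) ∧ ∑ i ∈ S, Nat.fib i = m} := by
      refine Equiv.trans (Equiv.sumCompl (fun S : X => 2 ∈ S.val)).symm ?_
      refine Equiv.sumCongr ?_ ?_ |>.trans (Equiv.sumComm _ _)
      · -- 2 ∈ S : map to reps of m with min ≥ 3 via erase
        refine ⟨fun S => ⟨S.val.val.erase 2, ?_, ?_⟩, fun S' => ⟨⟨insert 2 S'.val, ?_, ?_⟩, ?_⟩, ?_, ?_⟩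
        · intro i hi
          have h1 := S.val.prop.1 i (Finset.mem_of_mem_erase hi)
          have h2 := Finset.ne_of_mem_erase hi
          omega
        · have := Finset.add_sum_erase S.val.val Nat.fib S.prop
          have hsum := S.val.prop.2
          have hfib2 : Nat.fib 2 = 1 := rfl
          omega
        · intro i hi
          rcases Finset.mem_insert.mp hi with rfl | hi'
          · omega
          · exact le_trans (by norm_num) (S'.prop.1 i hi')
        · have h2notin : 2 ∉ S'.val := fun h => by have := S'.prop.1 2 h; omega
          rw [Finset.sum_insert h2notin, S'.prop.2]
          have hfib2 : Nat.fib 2 = 1 := rfl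
          omega
        · exact Finset.mem_insert_self 2 _
        · rintro ⟨⟨S, hS⟩, h2S⟩
          apply Subtype.ext
          apply Subtype.ext
          exact Finset.insert_erase h2S
        · rintro ⟨S', hS'⟩
          apply Subtype.ext
          apply Finset.erase_insert
          exact fun h => by have := hS'.1 2 h; omega
      · -- 2 ∉ S : reps of m+1 with min ≥ 3
        refine ⟨fun S => ⟨S.val.val, ?_, S.val.prop.2⟩, fun S' => ⟨⟨S'.val, fun i hi => le_trans (by norm_num) (S'.prop.1 i hi), S'.prop.2⟩, ?_⟩, ?_, ?_⟩
        · intro i hi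
          have h1 := S.val.prop.1 i hi
          have h2 : i ≠ 2 := fun h => S.prop (h ▸ hi)
          omega
        · exact fun h => by have := S'.prop.1 2 h; omega
        · rintro ⟨⟨S, hS⟩, h2S⟩; rfl
        · rintro ⟨S', hS'⟩; rfl
    rw [Nat.card_congr e, Nat.card_sum]
    rfl
  exact key

-- helper image lemmas
lemma image_pred_succ {S : Finset ℕ} (h : ∀ i ∈ S, 1 ≤ i) :
    (S.image (· - 1)).image (· + 1) = S := by
  rw [Finset.image_image]
  rw [show ((· + 1) ∘ (· - 1) : ℕ → ℕ) = fun i => i - 1 + 1 from rfl]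
  rw [Finset.image_congr (g := id) (fun i hi => by have := h i hi; simp; omega)]
  exact Finset.image_id

lemma image_succ_pred (S : Finset ℕ) : (S.image (· + 1)).image (· - 1) = S := by
  rw [Finset.image_image]
  rw [show ((· - 1) ∘ (· + 1) : ℕ → ℕ) = fun i => i + 1 - 1 from rfl]
  rw [Finset.image_congr (g := id) (fun i hi => by simp)]
  exact Finset.image_id

-- C2: the down map
lemma A_eq_R_down {m : ℕ} (h : y m < 2 * phi - 3) :
    ∃ d : ℕ, ((d : ℝ) = y m - m * psi) ∧ A m = R d ∧ y d = -phi * y m := by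
  classical
  obtain ⟨z, hz⟩ := y_mod m
  have hzval : (z : ℝ) = y m - m * psi := by rw [hz]; ring
  have hylb := ylb m
  have hz0 : (0:ℤ) ≤ z := by
    have h1 : (-1 : ℝ) < z := by
      rw [hzval, psi_eq]
      have hm0 : (0:ℝ) ≤ (m:ℝ) := Nat.cast_nonneg m
      nlinarith [phi_gt]
    have : (-1 : ℤ) < z := by exact_mod_cast h1
    omega
  set d : ℕ := z.toNat with hd
  have hdz : (d : ℤ) = z := Int.toNat_of_nonneg hz0
  have hdval : (d : ℝ) = y m - m * psi := by
    rw [← hzval]; exact_mod_cast congrArg (Int.cast : ℤ → ℝ) hdz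
  -- y d = -φ y m
  have hyd : y d = -phi * y m := by
    obtain ⟨w, hw⟩ := y_mod d
    have hdiff : y d - (-phi * y m) = ((w + z - m : ℤ) : ℝ) := by
      rw [hw, hz]
      push_cast
      rw [psi_eq]
      have hdr : (d:ℝ) = (z:ℝ) := by exact_mod_cast congrArg (Int.cast : ℤ → ℝ) hdz
      rw [hdr]
      linear_combination (-(m:ℝ)) * phi_sq
    have hphipos : (0:ℝ) < phi := by linarith [phi_gt]
    have t1 := mul_lt_mul_of_pos_left hylb hphipos
    have t2 := mul_lt_mul_of_pos_left h hphipos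
    have hb1 : -phi * y m < phi - 1 := by nlinarith [t1, phi_sq]
    have hb2 : phi - 2 < -phi * y m := by nlinarith [t2, phi_sq]
    have hy1 := (y_mem d).1
    have hy2 := (y_mem d).2
    exact int_eq_of_abs_lt _ hdiff (by linarith) (by linarith)
  refine ⟨d, hdval, ?_, hyd⟩
  -- bijection
  have e : {S : Finset ℕ // (∀ i ∈ S, 3 ≤ i) ∧ ∑ i ∈ S, Nat.fib i = m} ≃
      {S : Finset ℕ // (∀ i ∈ S, 2 ≤ i) ∧ ∑ i ∈ S, Nat.fib i = d} := by
    refine ⟨fun S => ⟨S.val.image (· - 1), ?_, ?_⟩, fun S' => ⟨S'.val.image (· + 1), ?_, ?_⟩, ?_, ?_⟩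
    · intro j hj
      obtain ⟨i, hi, rfl⟩ := Finset.mem_image.mp hj
      have := S.prop.1 i hi
      omega
    · -- sum over image = d
      have hinj : ∀ x ∈ S.val, ∀ y ∈ S.val, x - 1 = y - 1 → x = y := by
        intro x hx y hy hxy
        have := S.prop.1 x hx
        have := S.prop.1 y hy
        omega
      rw [Finset.sum_image hinj]
      have h2 : ∀ i ∈ S.val, 2 ≤ i := fun i hi => le_trans (by norm_num) (S.prop.1 i hi)
      have hreal := rep_fib_pred_sum h2 S.prop.2
      have : ((∑ i ∈ S.val, Nat.fib (i-1) : ℕ) : ℝ) = (d : ℝ) := by rw [hreal, hdval]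
      exact_mod_cast this
    · intro j hj
      obtain ⟨i, hi, rfl⟩ := Finset.mem_image.mp hj
      have := S'.prop.1 i hi
      omega
    · -- sum over +1 image = m
      have hinj : ∀ x ∈ S'.val, ∀ y ∈ S'.val, x + 1 = y + 1 → x = y := by
        intro x hx y hy hxy; omega
      rw [Finset.sum_image hinj]
      have hsplit : ∀ i ∈ S'.val, Nat.fib (i+1) = Nat.fib i + Nat.fib (i-1) := by
        intro i hi
        have h2 := S'.prop.1 i hi
        have e1 : i + 1 = (i-1) + 2 := by omega
        have e2 : i = (i-1) + 1 := by omega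
        rw [e1, Nat.fib_add_two, ← e2]
        omega
      rw [Finset.sum_congr rfl hsplit, Finset.sum_add_distrib, S'.prop.2]
      have hreal := rep_fib_pred_sum S'.prop.1 S'.prop.2
      have hgoal : ((d:ℝ) + ((∑ i ∈ S'.val, Nat.fib (i-1) : ℕ) : ℝ)) = (m : ℝ) := by
        rw [hreal, hyd, hdval, psi_eq]
        linear_combination (m:ℝ) * phi_sq
      exact_mod_cast hgoal
    · -- left inverse
      rintro ⟨S, hS⟩
      simp only [Subtype.mk.injEq]
      exact image_pred_succ (fun i hi => le_trans (by norm_num) (hS.1 i hi))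
    · -- right inverse
      rintro ⟨S', hS'⟩
      simp only [Subtype.mk.injEq]
      exact image_succ_pred S'
  exact Nat.card_congr e
-- ===== main =====
lemma main_iff : ∀ n : ℕ, R n = R (n + 1) ↔
    ((3*phi - 5 ≤ y n ∧ y n ≤ 0) ∨ (2 - phi ≤ y n ∧ y n ≤ 4*phi - 6)) := by
  intro n
  induction n using Nat.strong_induction_on with
  | _ n ih =>
    have hg := phi_gt
    have hl := phi_lt
    have hphi2 := phi_sq
    rcases n with _ | k
    · -- n = 0
      have h0 : y 0 = 0 := rfl
      constructor
      · intro _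
        left
        rw [h0]
        constructor <;> nlinarith
      · intro _
        have hy1 : y 1 = 2 - phi := by
          have h := y_succ 0
          rw [h0, T_lo (by nlinarith : (0:ℝ) < 2*phi - 3)] at h
          rw [h]; ring
        have hA1 : A 1 = 0 := A_eq_zero (by rw [hy1]; nlinarith)
        have hA0 : A 0 = R 0 := by
          obtain ⟨d, hdval, hAd, _⟩ := A_eq_R_down (m := 0) (by rw [h0]; nlinarith)
          have hd0 : d = 0 := by
            rw [h0] at hdval
            push_cast at hdval
            have : (d:ℝ) = 0 := by linarith [hdval]
            exact_mod_cast this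
          rwa [hd0] at hAd
        have h01 := R_eq_A_add_A 0
        have e : (0:ℕ) + 1 = 1 := rfl
        rw [e] at h01
        show R 0 = R (0 + 1)
        rw [e]
        omega
    · -- n = k+1
      have hR1 := R_eq_A_add_A k
      have hR2 := R_eq_A_add_A (k+1)
      have ek : k + 1 + 1 = k + 2 := rfl
      rw [ek] at hR2
      have hTk := y_succ k
      have hTn := y_succ (k+1)
      have hyme := y_mem (k+1)
      have hymek := y_mem k
      suffices hiff : A k = A (k+2) ↔ ((3*phi - 5 ≤ y (k+1) ∧ y (k+1) ≤ 0) ∨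
          (2 - phi ≤ y (k+1) ∧ y (k+1) ≤ 4*phi - 6)) by
        rw [← hiff]
        show R (k+1) = R (k+2) ↔ A k = A (k+2)
        constructor
        · intro h; omega
        · intro h; omega
      rcases le_or_gt (2*phi - 3) (y (k+1)) with h1 | h1
      · -- CASE A
        have hbk : y k < 2*phi - 3 := by
          by_contra hb
          rw [T_hi hb] at hTk
          nlinarith [hymek.2]
        have hyk : y k = y (k+1) - (2 - phi) := by
          rw [T_lo hbk] at hTk; linarith
        have hyn1lt : y (k+2) < 2*phi - 3 := by
          rw [T_hi (not_lt.mpr h1)] at hTn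
          nlinarith [hyme.2]
        obtain ⟨d, hdval, hAd, hyd⟩ := A_eq_R_down hbk
        obtain ⟨d', hdval', hAd', hyd'⟩ := A_eq_R_down hyn1lt
        have hd' : d' = d + 1 := by
          have hr : (d':ℝ) = (d:ℝ) + 1 := by
            rw [hdval, hdval', hyk, psi_eq]
            rw [T_hi (not_lt.mpr h1)] at hTn
            rw [hTn]
            push_cast
            ring
          exact_mod_cast hr
        have hdlt : d < k + 1 := by
          have hr : (d:ℝ) < (k:ℝ) + 1 := by
            rw [hdval, psi_eq]
            have hk0 : (0:ℝ) ≤ (k:ℝ) := Nat.cast_nonneg k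
            have hk2 : (0:ℝ) ≤ (k:ℝ) * (2 - phi) := mul_nonneg hk0 (by linarith)
            linarith [hymek.2]
          exact_mod_cast hr
        have ihd := ih d hdlt
        rw [hAd, hAd', hd', ihd]
        have hydv : y d = -phi * (y (k+1) - (2 - phi)) := by rw [hyd, hyk]
        have hydlin : y d = -(phi * y (k+1)) + phi - 1 := by
          rw [hydv]; linear_combination (-1:ℝ) * phi_sq
        have hphipos : (0:ℝ) < phi := by linarith
        have hm1 : phi * (2 - phi) = phi - 1 := by linear_combination (-1:ℝ) * phi_sq
        have hm2 : phi * (4*phi - 6) = 4 - 2*phi := by linear_combination (4:ℝ) * phi_sq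
        have hm3 : phi * (2*phi - 3) = 2 - phi := by linear_combination (2:ℝ) * phi_sq
        constructor
        · rintro (⟨p1, p2⟩ | ⟨q1, q2⟩)
          · right
            rw [hydlin] at p1 p2
            have hL1 : phi * (2 - phi) ≤ phi * y (k+1) := by rw [hm1]; linarith
            have hL2 : phi * y (k+1) ≤ phi * (4*phi - 6) := by rw [hm2]; linarith
            exact ⟨(mul_le_mul_iff_right₀ hphipos).mp hL1, (mul_le_mul_iff_right₀ hphipos).mp hL2⟩
          · exfalso
            rw [hydlin] at q1
            have hL3 : phi * (2*phi - 3) ≤ phi * y (k+1) :=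
              mul_le_mul_of_nonneg_left h1 (le_of_lt hphipos)
            rw [hm3] at hL3
            linarith
        · rintro (⟨p1, p2⟩ | ⟨q1, q2⟩)
          · exfalso; linarith
          · left
            rw [hydlin]
            have hL1 : phi * (2 - phi) ≤ phi * y (k+1) :=
              mul_le_mul_of_nonneg_left q1 (le_of_lt hphipos)
            have hL2 : phi * y (k+1) ≤ phi * (4*phi - 6) :=
              mul_le_mul_of_nonneg_left q2 (le_of_lt hphipos)
            rw [hm1] at hL1
            rw [hm2] at hL2
            constructor
            · linarith
            · linarith
      · rcases le_or_gt 0 (y (k+1)) with h2 | h2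
        · -- CASE B
          have hne := y_ne_zero (k+1) (by omega)
          have h2' : 0 < y (k+1) := lt_of_le_of_ne h2 (Ne.symm hne)
          have hAk2 : A (k+2) = 0 := by
            apply A_eq_zero
            rw [T_lo h1] at hTn
            rw [hTn]
            nlinarith
          have hAk : 0 < A k := by
            apply A_pos
            by_contra hb
            rw [T_hi hb] at hTk
            nlinarith [hymek.2]
          constructor
          · intro h; omega
          · rintro (⟨p1, p2⟩ | ⟨q1, q2⟩)
            · linarith
            · linarith
        · -- y (k+1) < 0
          have hAk : A k = 0 := by
            apply A_eq_zero
            by_contra hb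
            push_neg at hb
            rw [T_lo hb] at hTk
            nlinarith [hymek.1]
          rcases le_or_gt (3*phi - 5) (y (k+1)) with h3 | h3
          · -- CASE C
            have hAk2 : A (k+2) = 0 := by
              apply A_eq_zero
              rw [T_lo h1] at hTn
              rw [hTn]
              nlinarith
            constructor
            · intro _; exact Or.inl ⟨h3, h2.le⟩
            · intro _; omega
          · -- CASE D
            have hAk2 : 0 < A (k+2) := by
              apply A_pos
              rw [T_lo h1] at hTn
              rw [hTn]
              nlinarith
            constructor
            · intro h; omega
            · rintro (⟨p1, p2⟩ | ⟨q1, q2⟩)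
              · linarith
              · linarith



/-- R(n) = R(n+1) iff T^n(0) ∈ [−1/φ⁴, 0] ∪ [1/φ², 1/φ² + 1/φ⁵]. -/
theorem stmt_15 (n : ℕ) :
    R n = R (n + 1) ↔
      T^[n] 0 ∈ Set.Icc (-(1 / phi ^ 4)) 0 ∪
        Set.Icc (1 / phi ^ 2) (1 / phi ^ 2 + 1 / phi ^ 5) := by
  have hy : T^[n] 0 = y n := rfl
  rw [hy]
  simp only [Set.mem_union, Set.mem_Icc, inv_phi2, inv_phi4, inv_phi5]
  have e1 : -(5 - 3*phi) = 3*phi - 5 := by ring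
  have e2 : 2 - phi + (5*phi - 8) = 4*phi - 6 := by ring
  rw [e1, e2]
  exact main_iff n

end
end

section
/- One has R(0) ≤ R(1) ≤ R(2) ≤ R(3), but for every n ≥ 1 there exists i ∈ {0,1,2} with R(n+i) > R(n+i+1). In other words, the longest run of consecutive indices on which R is non-decreasing has length 4 (terms R(0), R(1), R(2), R(3)), and this occurs uniquely at n = 0. -/
open Real Finset

noncomputable section

/-- Number of representations of `x` as a sum of distinct Fibonacci numbers with
indices in `[2, t]`. -/
def G (x t : ℕ) : ℕ :=
  (((Finset.range (t+1)).powerset).filter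
    (fun S => (∀ i ∈ S, 2 ≤ i) ∧ ∑ i ∈ S, Nat.fib i = x)).card

lemma G_zero (t : ℕ) : G 0 t = 1 := by
  unfold G
  rw [Finset.card_eq_one]
  refine ⟨∅, ?_⟩
  ext S
  simp only [mem_filter, mem_powerset, mem_singleton]
  constructor
  · rintro ⟨-, h2, hs⟩
    by_contra hne
    obtain ⟨a, ha⟩ := Finset.nonempty_iff_ne_empty.2 hne
    have : Nat.fib a ≠ 0 := by
      have := h2 a ha
      have : 0 < Nat.fib a := Nat.fib_pos.2 (by omega)
      omega
    have : Nat.fib a ≤ ∑ i ∈ S, Nat.fib i := Finset.single_le_sum (fun _ _ => Nat.zero_le _) ha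
    omega
  · rintro rfl
    simp

lemma G_le_one (x t : ℕ) (hx : 1 ≤ x) (ht : t ≤ 1) : G x t = 0 := by
  unfold G
  rw [Finset.card_eq_zero]
  ext S
  simp only [mem_filter, mem_powerset, notMem_empty, iff_false, not_and]
  intro hS h2 hsum
  have : S = ∅ := by
    by_contra hne
    obtain ⟨a, ha⟩ := Finset.nonempty_iff_ne_empty.2 hne
    have h1 := h2 a ha
    have := hS ha
    simp only [mem_range] at this
    omega
  subst this
  simp at hsum
  omega

lemma G_split (x t : ℕ) (ht : 1 ≤ t) :
    G x (t+1) = G x t + if Nat.fib (t+1) ≤ x then G (x - Nat.fib (t+1)) t else 0 := by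
  classical
  unfold G
  have hsplit := Finset.card_filter_add_card_filter_not
    (s := ((Finset.range (t+1+1)).powerset).filter
      (fun S => (∀ i ∈ S, 2 ≤ i) ∧ ∑ i ∈ S, Nat.fib i = x)) (p := fun S => (t+1) ∈ S)
  simp only [Finset.filter_filter] at hsplit
  have h0 : (((Finset.range (t+1+1)).powerset).filter
      (fun S => ((∀ i ∈ S, 2 ≤ i) ∧ ∑ i ∈ S, Nat.fib i = x) ∧ ¬ (t+1) ∈ S)) =
      ((Finset.range (t+1)).powerset).filter (fun S => (∀ i ∈ S, 2 ≤ i) ∧ ∑ i ∈ S, Nat.fib i = x) := by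
    ext S
    simp only [Finset.mem_filter, Finset.mem_powerset]
    constructor
    · rintro ⟨hsub, hPS, hni⟩
      refine ⟨fun a ha => ?_, hPS⟩
      have h5 := hsub ha
      simp only [Finset.mem_range] at h5 ⊢
      rcases Nat.lt_or_ge a (t+1) with h | h
      · exact h
      · exfalso
        have : a = t+1 := by omega
        subst this
        exact hni ha
    · rintro ⟨hsub, hPS⟩
      refine ⟨fun a ha => ?_, hPS, fun hc => ?_⟩
      · have := hsub ha
        simp only [Finset.mem_range] at this ⊢
        omega
      · have := hsub hc
        simp only [Finset.mem_range] at this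
        omega
  have h1 : (((Finset.range (t+1+1)).powerset).filter
      (fun S => ((∀ i ∈ S, 2 ≤ i) ∧ ∑ i ∈ S, Nat.fib i = x) ∧ (t+1) ∈ S)).card =
      if Nat.fib (t+1) ≤ x then
        ((((Finset.range (t+1)).powerset).filter
          (fun S => (∀ i ∈ S, 2 ≤ i) ∧ ∑ i ∈ S, Nat.fib i = x - Nat.fib (t+1))).card) else 0 := by
    split_ifs with hle
    · refine Finset.card_bij' (fun S _ => S.erase (t+1)) (fun T _ => insert (t+1) T) ?_ ?_ ?_ ?_
      · intro S hS
        simp only [Finset.mem_filter, Finset.mem_powerset] at hS ⊢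
        obtain ⟨hsub, ⟨h2, hsum⟩, hmem⟩ := hS
        have herase : Nat.fib (t+1) + ∑ i ∈ S.erase (t+1), Nat.fib i = x := by
          rw [Finset.add_sum_erase _ _ hmem, hsum]
        refine ⟨?_, fun i hi => h2 i (Finset.mem_of_mem_erase hi), by omega⟩
        intro a ha
        have h3 := Finset.mem_of_mem_erase ha
        have h4 := Finset.ne_of_mem_erase ha
        have := hsub h3
        simp only [Finset.mem_range] at this ⊢
        omega
      · intro T hT
        simp only [Finset.mem_filter, Finset.mem_powerset] at hT ⊢
        obtain ⟨hsub, h2, hsum⟩ := hT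
        have hni : (t+1) ∉ T := by
          intro hc
          have := hsub hc
          simp only [Finset.mem_range] at this
          omega
        refine ⟨?_, ⟨?_, ?_⟩, Finset.mem_insert_self _ _⟩
        · intro a ha
          rcases Finset.mem_insert.1 ha with rfl | ha
          · simp only [Finset.mem_range]; omega
          · have := hsub ha
            simp only [Finset.mem_range] at this ⊢
            omega
        · intro i hi
          rcases Finset.mem_insert.1 hi with rfl | hi
          · omega
          · exact h2 i hi
        · rw [Finset.sum_insert hni, hsum]
          omega
      · intro S hS
        simp only [Finset.mem_filter] at hS
        exact Finset.insert_erase hS.2.2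
      · intro T hT
        simp only [Finset.mem_filter, Finset.mem_powerset] at hT
        apply Finset.erase_insert
        intro hc
        have := hT.1 hc
        simp only [Finset.mem_range] at this
        omega
    · rw [Finset.card_eq_zero]
      ext S
      simp only [Finset.mem_filter, Finset.notMem_empty, iff_false, not_and]
      rintro hsub ⟨h2, hsum⟩ hmem
      have : Nat.fib (t+1) ≤ ∑ i ∈ S, Nat.fib i :=
        Finset.single_le_sum (fun _ _ => Nat.zero_le _) hmem
      omega
  rw [h0, h1] at hsplit
  omega

lemma sum_fib_Icc (t : ℕ) : ∑ i ∈ Finset.Icc 2 t, Nat.fib i = Nat.fib (t+2) - 2 := by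
  induction t with
  | zero => simp
  | succ t ih =>
    rcases Nat.lt_or_ge t 1 with h | h
    · interval_cases t
      · decide
    · rw [← Finset.insert_Icc_right_eq_Icc_add_one (by omega : 2 ≤ t + 1), Finset.sum_insert (by simp)]
      rw [ih]
      have ha : Nat.fib (t+1+2) = Nat.fib (t+1) + Nat.fib (t+1+1) := Nat.fib_add_two
      have hb : Nat.fib (t+1+1) = Nat.fib (t+2) := rfl
      have h2 : 2 ≤ Nat.fib (t+2) := by
        have h3 : Nat.fib 3 ≤ Nat.fib (t+2) := Nat.fib_mono (by omega)
        simpa [show Nat.fib 3 = 2 from rfl] using h3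
      omega

lemma G_vanish (x t : ℕ) (h : Nat.fib (t+2) - 2 < x) : G x t = 0 := by
  unfold G
  rw [Finset.card_eq_zero]
  ext S
  simp only [Finset.mem_filter, Finset.mem_powerset, Finset.notMem_empty, iff_false, not_and]
  rintro hsub h2 hsum
  have hS : S ⊆ Finset.Icc 2 t := by
    intro a ha
    have := hsub ha
    simp only [Finset.mem_range] at this
    simp only [Finset.mem_Icc]
    exact ⟨h2 a ha, by omega⟩
  have : ∑ i ∈ S, Nat.fib i ≤ ∑ i ∈ Finset.Icc 2 t, Nat.fib i :=
    Finset.sum_le_sum_of_subset hS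
  rw [sum_fib_Icc] at this
  omega

lemma G_stab (x b : ℕ) (hb : 1 ≤ b) (hx : x < Nat.fib (b+1)) :
    ∀ t, b ≤ t → G x t = G x b := by
  intro t
  induction t with
  | zero => intro h; omega
  | succ t ih =>
    intro h
    rcases Nat.lt_or_ge t b with h2 | h2
    · have : b = t + 1 := by omega
      rw [this]
    · have ht : 1 ≤ t := by omega
      rw [G_split x t ht, if_neg, ← ih h2]
      · omega
      · have : Nat.fib (b+1) ≤ Nat.fib (t+1) := Nat.fib_mono (by omega)
        omega

/-- One step of the Zeckendorf-gap DP. -/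
def rqStep (d : ℕ) (p : ℕ × ℕ) : ℕ × ℕ :=
  if d % 2 = 1 then (p.1 + (d-1)/2 * p.1, (d-1)/2 * p.1)
  else (p.1 + ((d-2)/2 * p.1 + p.2), (d-2)/2 * p.1 + p.2)

/-- The pair (R, q) computed from a Zeckendorf list (most significant index first). -/
def rq : List ℕ → ℕ × ℕ
  | [] => (1, 0)
  | k :: ks => rqStep (k - ks.headD 1) (rq ks)

lemma rqStep_fst (d : ℕ) (p : ℕ × ℕ) : (rqStep d p).1 = p.1 + (rqStep d p).2 := by
  unfold rqStep
  split <;> rfl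

lemma Gstep (b m' r₂ c : ℕ) (hb : 1 ≤ b) (hc : 1 ≤ c) (hbc : b ≤ c + 1)
    (hlt : m' < Nat.fib (b+1)) (hr : G m' b = r₂) :
    G (Nat.fib (c+2) + m') (c+2) = G (Nat.fib c + m') c + r₂ := by
  have hfib : Nat.fib (c+2) = Nat.fib c + Nat.fib (c+1) := Nat.fib_add_two
  have e1 : Nat.fib (c+1+1) = Nat.fib (c+2) := rfl
  have hpos : 1 ≤ Nat.fib (c+1) := Nat.fib_pos.2 (by omega)
  have h1 : G (Nat.fib (c+2) + m') (c+1+1)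
      = G (Nat.fib (c+2) + m') (c+1) + G m' (c+1) := by
    rw [G_split _ (c+1) (by omega), if_pos (by omega)]
    have harg : Nat.fib (c+2) + m' - Nat.fib (c+1+1) = m' := by omega
    rw [harg]
  have e2 : Nat.fib (c+1) = Nat.fib (c+1) := rfl
  have h2 : G (Nat.fib (c+2) + m') (c+1)
      = G (Nat.fib (c+2) + m') c + G (Nat.fib c + m') c := by
    rw [G_split _ c hc, if_pos (by omega)]
    have harg : Nat.fib (c+2) + m' - Nat.fib (c+1) = Nat.fib c + m' := by omega
    rw [harg]
  have h3 : G (Nat.fib (c+2) + m') c = 0 := by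
    apply G_vanish
    omega
  have h4 : G m' (c+1) = r₂ := by
    rw [G_stab m' b hb hlt (c+1) (by omega), hr]
  have e3 : c+1+1 = c+2 := rfl
  rw [← e3, h1, h2, h3, h4]
  omega

lemma qchain (b m' r₂ q₂ : ℕ) (hb : 1 ≤ b) (hlt : m' < Nat.fib (b+1))
    (hge : Nat.fib b ≤ m' + 1) (h1 : G m' b = r₂) (h2 : G (Nat.fib b + m') b = q₂) :
    ∀ j, G (Nat.fib (b + 2*j) + m') (b + 2*j) = j * r₂ + q₂ ∧
         G (Nat.fib (b + 2*j + 1) + m') (b + 2*j + 1) = (j+1) * r₂ := by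
  intro j
  induction j with
  | zero =>
    constructor
    · simpa using h2
    · have hfib : Nat.fib (b+2) = Nat.fib b + Nat.fib (b+1) := Nat.fib_add_two
      have e1 : Nat.fib (b+1) = Nat.fib (b+1) := rfl
      have hpos : 1 ≤ Nat.fib (b+1) := Nat.fib_pos.2 (by omega)
      have hsplit : G (Nat.fib (b+1) + m') (b+1)
          = G (Nat.fib (b+1) + m') b + G m' b := by
        rw [G_split _ b hb, if_pos (by omega)]
        have harg : Nat.fib (b+1) + m' - Nat.fib (b+1) = m' := by omega
        rw [harg]
      have hv : G (Nat.fib (b+1) + m') b = 0 := by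
        apply G_vanish
        omega
      have he : b + 2*0 + 1 = b + 1 := by omega
      rw [he, hsplit, hv, h1]
      omega
  | succ j ih =>
    constructor
    · have he : b + 2*(j+1) = (b + 2*j) + 2 := by omega
      rw [he, Gstep b m' r₂ (b+2*j) hb (by omega) (by omega) hlt h1, ih.1]
      ring
    · have he : b + 2*(j+1) + 1 = (b + 2*j + 1) + 2 := by omega
      rw [he, Gstep b m' r₂ (b+2*j+1) hb (by omega) (by omega) hlt h1, ih.2]
      ring

lemma main_cons (u b m' r₂ q₂ : ℕ) (hb : 1 ≤ b) (hk : b ≤ u)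
    (hlt : m' < Nat.fib (b+1)) (hge : Nat.fib b ≤ m' + 1)
    (h1 : G m' b = r₂) (h2 : G (Nat.fib b + m') b = q₂) :
    G (Nat.fib (u+2) + m') (u+2) = (rqStep (u + 2 - b) (r₂, q₂)).1 ∧
    G (Nat.fib (u+2) + (Nat.fib (u+2) + m')) (u+2) = (rqStep (u + 2 - b) (r₂, q₂)).2 := by
  have hqc : G (Nat.fib u + m') u = (rqStep (u + 2 - b) (r₂, q₂)).2 := by
    rcases Nat.even_or_odd (u - b) with he | ho
    · obtain ⟨j, hj⟩ : ∃ j, u = b + 2*j := by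
        obtain ⟨j, hj⟩ := he
        exact ⟨j, by omega⟩
      subst hj
      rw [(qchain b m' r₂ q₂ hb hlt hge h1 h2 j).1]
      unfold rqStep
      rw [if_neg (by omega)]
      simp only
      have hdd : (b + 2*j + 2 - b - 2)/2 = j := by omega
      rw [hdd]
    · obtain ⟨j, hj⟩ : ∃ j, u = b + 2*j + 1 := by
        obtain ⟨j, hj⟩ := ho
        exact ⟨j, by omega⟩
      subst hj
      rw [(qchain b m' r₂ q₂ hb hlt hge h1 h2 j).2]
      unfold rqStep
      rw [if_pos (by omega)]
      simp only
      have hdd : (b + 2*j + 1 + 2 - b - 1)/2 = j + 1 := by omega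
      rw [hdd]
  have hfib : Nat.fib (u+2) = Nat.fib u + Nat.fib (u+1) := Nat.fib_add_two
  have e0 : Nat.fib (u+1+1) = Nat.fib (u+2) := rfl
  have hfib3 : Nat.fib (u+3) = Nat.fib (u+1) + Nat.fib (u+2) := Nat.fib_add_two
  have e3 : Nat.fib (u+1+2) = Nat.fib (u+3) := rfl
  have hpos1 : 1 ≤ Nat.fib (u+1) := Nat.fib_pos.2 (by omega)
  have hpos2 : 1 ≤ Nat.fib (u+2) := Nat.fib_pos.2 (by omega)
  have hq : G (Nat.fib (u+2) + m') (u+1) = (rqStep (u + 2 - b) (r₂, q₂)).2 := by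
    rw [G_split _ u (by omega), if_pos (by omega)]
    have hv : G (Nat.fib (u+2) + m') u = 0 := by
      apply G_vanish
      omega
    have harg : Nat.fib (u+2) + m' - Nat.fib (u+1) = Nat.fib u + m' := by omega
    rw [hv, harg, hqc]
    omega
  constructor
  · rw [G_split _ (u+1) (by omega), if_pos (by omega)]
    have harg : Nat.fib (u+2) + m' - Nat.fib (u+1+1) = m' := by omega
    rw [harg, hq, G_stab m' b hb hlt (u+1) (by omega), h1, rqStep_fst]
    omega
  · rw [G_split _ (u+1) (by omega), if_pos (by omega)]
    have hv : G (Nat.fib (u+2) + (Nat.fib (u+2) + m')) (u+1) = 0 := by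
      apply G_vanish
      omega
    have harg : Nat.fib (u+2) + (Nat.fib (u+2) + m') - Nat.fib (u+1+1)
        = Nat.fib (u+2) + m' := by omega
    rw [hv, harg, hq]
    omega

lemma zeck_head_ge_two {b : ℕ} {ks : List ℕ} (h : List.IsZeckendorfRep (b :: ks)) :
    2 ≤ b := by
  unfold List.IsZeckendorfRep at h
  rw [List.cons_append, List.isChain_cons] at h
  obtain ⟨hrel, -⟩ := h
  cases ks with
  | nil => have := hrel 0 rfl; omega
  | cons b' ks' => have := hrel b' rfl; omega

theorem G_rq : ∀ l : List ℕ, l.IsZeckendorfRep →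
    G ((l.map Nat.fib).sum) (l.headD 1) = (rq l).1 ∧
    G (Nat.fib (l.headD 1) + (l.map Nat.fib).sum) (l.headD 1) = (rq l).2 := by
  intro l
  induction l with
  | nil =>
    intro _
    constructor
    · simpa [rq] using G_zero 1
    · simpa [rq] using G_le_one 1 1 le_rfl le_rfl
  | cons k ks ih =>
    intro hl
    have hl' : (k :: (ks ++ [0])).Chain' (fun a b => b + 2 ≤ a) := by
      have := hl
      unfold List.IsZeckendorfRep at this
      rwa [List.cons_append] at this
    rw [List.Chain', List.isChain_cons] at hl'
    obtain ⟨hrel, hks⟩ := hl'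
    have hks' : ks.IsZeckendorfRep := hks
    obtain ⟨IH1, IH2⟩ := ih hks'
    simp only [List.map_cons, List.sum_cons, List.headD_cons]
    cases ks with
    | nil =>
      have hk2 : 2 ≤ k := by have := hrel 0 rfl; omega
      rcases Nat.eq_or_lt_of_le hk2 with h2 | h3
      · subst h2
        constructor
        · decide
        · decide
      · obtain ⟨u, rfl⟩ : ∃ u, k = u + 2 := ⟨k - 2, by omega⟩
        have hmc := main_cons u 1 0 1 0 le_rfl (by omega) (by decide) (by decide)
          (G_zero 1) (by simpa using G_le_one 1 1 le_rfl le_rfl)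
        simp only [List.map_nil, List.sum_nil, Nat.add_zero] at *
        have hrq : rq [u+2] = rqStep (u + 2 - 1) (1, 0) := rfl
        rw [hrq]
        simpa using hmc
    | cons b ks' =>
      have hb2 : 2 ≤ b := zeck_head_ge_two hks'
      have hkb : b + 2 ≤ k := by have := hrel b rfl; omega
      have hlt : ((b :: ks').map Nat.fib).sum < Nat.fib (b + 1) := by
        apply hks'.sum_fib_lt
        intro a ha
        simp only [List.cons_append, List.head?_cons, Option.mem_some_iff] at ha
        omega
      have hge : Nat.fib b ≤ ((b :: ks').map Nat.fib).sum + 1 := by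
        simp only [List.map_cons, List.sum_cons]
        omega
      obtain ⟨u, rfl⟩ : ∃ u, k = u + 2 := ⟨k - 2, by omega⟩
      have hmc := main_cons u b (((b :: ks').map Nat.fib).sum) (rq (b :: ks')).1
        (rq (b :: ks')).2 (by omega) (by omega) hlt hge
        (by simpa using IH1) (by simpa using IH2)
      have hrq : rq ((u+2) :: b :: ks') = rqStep (u + 2 - b) (rq (b :: ks')) := rfl
      rw [hrq]
      simpa using hmc

lemma R_eq_G (n : ℕ) : R n = G n (n+2) := by
  unfold R G
  have e : {S : Finset ℕ // (∀ i ∈ S, 2 ≤ i) ∧ ∑ i ∈ S, Nat.fib i = n} ≃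
      {S : Finset ℕ // S ∈ ((Finset.range (n+2+1)).powerset).filter
        (fun S => (∀ i ∈ S, 2 ≤ i) ∧ ∑ i ∈ S, Nat.fib i = n)} := by
    apply Equiv.subtypeEquivRight
    intro S
    simp only [Finset.mem_filter, Finset.mem_powerset]
    constructor
    · rintro ⟨h2, hsum⟩
      refine ⟨fun a ha => ?_, h2, hsum⟩
      have hle : Nat.fib a ≤ n := by
        rw [← hsum]
        exact Finset.single_le_sum (fun _ _ => Nat.zero_le _) ha
      have := Nat.le_fib_add_one a
      simp only [Finset.mem_range]
      omega
    · rintro ⟨-, h2, hsum⟩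
      exact ⟨h2, hsum⟩
  rw [Nat.card_congr e, Nat.card_eq_finsetCard]

lemma R_eq (l : List ℕ) (hl : l.IsZeckendorfRep) :
    R ((l.map Nat.fib).sum) = (rq l).1 := by
  cases l with
  | nil =>
    simp only [List.map_nil, List.sum_nil]
    rw [R_eq_G]
    exact G_zero 2
  | cons k ks =>
    have hk2 : 2 ≤ k := zeck_head_ge_two hl
    have hlt : ((k :: ks).map Nat.fib).sum < Nat.fib (k + 1) := by
      apply hl.sum_fib_lt
      intro a ha
      simp only [List.cons_append, List.head?_cons, Option.mem_some_iff] at ha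
      omega
    have hge : Nat.fib k ≤ ((k :: ks).map Nat.fib).sum := by
      simp only [List.map_cons, List.sum_cons]
      omega
    have hfk : k ≤ Nat.fib k + 1 := Nat.le_fib_add_one k
    rw [R_eq_G, G_stab _ k (by omega) hlt _ (by omega)]
    have := (G_rq (k :: ks) hl).1
    simpa using this

lemma rqStep_mono (d : ℕ) {p p' : ℕ × ℕ} (h1 : p.1 < p'.1) (h2 : p.2 ≤ p'.2) :
    (rqStep d p).1 < (rqStep d p').1 ∧ (rqStep d p).2 ≤ (rqStep d p').2 := by
  unfold rqStep
  split
  · have := Nat.mul_le_mul_left ((d-1)/2) (le_of_lt h1)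
    constructor <;> simp only <;> omega
  · have := Nat.mul_le_mul_left ((d-2)/2) (le_of_lt h1)
    constructor <;> simp only <;> omega

lemma rq_mono : ∀ (P S₁ S₂ : List ℕ), S₁.headD 1 = S₂.headD 1 →
    (rq S₁).1 < (rq S₂).1 → (rq S₁).2 ≤ (rq S₂).2 →
    (rq (P ++ S₁)).1 < (rq (P ++ S₂)).1 ∧ (rq (P ++ S₁)).2 ≤ (rq (P ++ S₂)).2 := by
  intro P
  induction P with
  | nil => exact fun S₁ S₂ _ h1 h2 => ⟨h1, h2⟩
  | cons a P' ih =>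
    intro S₁ S₂ hh h1 h2
    obtain ⟨ih1, ih2⟩ := ih S₁ S₂ hh h1 h2
    have hhd : (P' ++ S₁).headD 1 = (P' ++ S₂).headD 1 := by
      cases P' with
      | nil => simpa using hh
      | cons x xs => rfl
    have e1 : rq ((a :: P') ++ S₁) = rqStep (a - (P' ++ S₁).headD 1) (rq (P' ++ S₁)) := rfl
    have e2 : rq ((a :: P') ++ S₂) = rqStep (a - (P' ++ S₂).headD 1) (rq (P' ++ S₂)) := rfl
    rw [e1, e2, ← hhd]
    exact rqStep_mono _ ih1 ih2

/-- Validity of reversed (increasing) Zeckendorf lists. -/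
def ZR (rl : List ℕ) : Prop := (0 :: rl).Chain' (fun a b => a + 2 ≤ b)

lemma isZeck_iff_ZR (l : List ℕ) : l.IsZeckendorfRep ↔ ZR l.reverse := by
  unfold List.IsZeckendorfRep ZR
  have h1 : List.Chain' (fun a b => b + 2 ≤ a) (l ++ [0]) ↔
      List.Chain' (flip (fun a b : ℕ => a + 2 ≤ b)) (l ++ [0]) := by
    constructor
    · intro h; exact h.imp (fun a b hab => hab)
    · intro h; exact h.imp (fun a b hab => hab)
  rw [List.Chain', ← List.isChain_reverse (R := fun a b : ℕ => a + 2 ≤ b)]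
  have : (l ++ [0]).reverse = 0 :: l.reverse := by
    rw [List.reverse_append]
    rfl
  rw [this]

/-- Add a Fibonacci `F c` at the bottom of a reversed Zeckendorf list, merging upward. -/
def carry : ℕ → List ℕ → List ℕ
  | c, [] => [c]
  | c, k :: rest => if k = c + 1 then carry (c+2) rest else c :: k :: rest

lemma carry_nil (c : ℕ) : carry c [] = [c] := rfl

lemma carry_cons (c k : ℕ) (rest : List ℕ) :
    carry c (k :: rest) = if k = c + 1 then carry (c+2) rest else c :: k :: rest := rfl

lemma carry_spec : ∀ (L : List ℕ) (c : ℕ), (∀ x ∈ L.head?, c + 1 ≤ x) →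
    L.Chain' (fun a b => a + 2 ≤ b) →
    ∃ h tl, carry c L = h :: tl ∧ (h :: tl).Chain' (fun a b => a + 2 ≤ b) ∧
      h % 2 = c % 2 ∧ c ≤ h ∧
      ((carry c L).map Nat.fib).sum = Nat.fib c + (L.map Nat.fib).sum := by
  intro L
  induction L with
  | nil =>
    intro c _ _
    refine ⟨c, [], rfl, List.isChain_singleton c, rfl, le_rfl, by rw [carry_nil]; simp⟩
  | cons k rest ih =>
    intro c hhead hchain
    by_cases hk : k = c + 1
    · subst hk
      have hch : rest.Chain' (fun a b => a + 2 ≤ b) := hchain.tail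
      have hhd : ∀ x ∈ rest.head?, (c + 2) + 1 ≤ x := by
        intro x hx
        have := List.isChain_cons.1 hchain
        have h2 := this.1 x hx
        omega
      obtain ⟨h, tl, he, hc, hp, hge, hs⟩ := ih (c+2) hhd hch
      have hcar : carry c ((c+1) :: rest) = carry (c+2) rest := by
        rw [carry_cons, if_pos rfl]
      refine ⟨h, tl, by rw [hcar, he], hc, by omega, by omega, ?_⟩
      rw [hcar, hs]
      simp only [List.map_cons, List.sum_cons]
      have : Nat.fib (c+2) = Nat.fib c + Nat.fib (c+1) := Nat.fib_add_two
      omega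
    · have hk1 : c + 1 ≤ k := hhead k rfl
      have hcar : carry c (k :: rest) = c :: k :: rest := by
        rw [carry_cons, if_neg hk]
      refine ⟨c, k :: rest, hcar, ?_, rfl, le_rfl, by rw [hcar]; simp⟩
      rw [List.Chain', List.isChain_cons_cons]
      exact ⟨by omega, hchain⟩

lemma sumF_reverse (l : List ℕ) : (l.reverse.map Nat.fib).sum = (l.map Nat.fib).sum := by
  rw [List.map_reverse, List.sum_reverse]

/-- Core descent lemma. -/
lemma R_desc (P S₁ S₂ : List ℕ) (h1 : (P ++ S₁).IsZeckendorfRep)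
    (h2 : (P ++ S₂).IsZeckendorfRep)
    (hsum : ((P ++ S₂).map Nat.fib).sum = ((P ++ S₁).map Nat.fib).sum + 1)
    (hh : S₂.headD 1 = S₁.headD 1)
    (ha : (rq S₂).1 < (rq S₁).1) (hb : (rq S₂).2 ≤ (rq S₁).2) :
    R (((P ++ S₁).map Nat.fib).sum + 1) < R (((P ++ S₁).map Nat.fib).sum) := by
  rw [← hsum, R_eq _ h2, R_eq _ h1]
  exact (rq_mono P S₂ S₁ hh ha hb).1

lemma ZR_cons_iff (k : ℕ) (rest : List ℕ) :
    ZR (k :: rest) ↔ 2 ≤ k ∧ (∀ x ∈ rest.head?, k + 2 ≤ x) ∧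
      rest.Chain' (fun a b => a + 2 ≤ b) := by
  unfold ZR
  rw [List.Chain', List.isChain_cons]
  constructor
  · rintro ⟨hr, hc⟩
    have h2 : 2 ≤ k := by have := hr k rfl; omega
    rw [List.isChain_cons] at hc
    exact ⟨h2, hc.1, hc.2⟩
  · rintro ⟨h2, hr, hc⟩
    constructor
    · intro x hx
      simp only [List.head?_cons, Option.mem_some_iff] at hx
      omega
    · rw [List.isChain_cons]
      exact ⟨hr, hc⟩

lemma rq_two : rq [2] = (1, 0) := by decide

lemma rq_three : rq [3] = (1, 0) := by decide

/-- Descent when the bottom index is even and at least 4. -/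
lemma descA (k : ℕ) (rest : List ℕ) (hz : ZR (k :: rest)) (hk2 : k % 2 = 0) (hk4 : 4 ≤ k) :
    R (((k :: rest).map Nat.fib).sum + 1) < R (((k :: rest).map Nat.fib).sum) := by
  obtain ⟨hk, hhd, hch⟩ := (ZR_cons_iff k rest).1 hz
  have hchk : (k :: rest).Chain' (fun a b => a + 2 ≤ b) := List.isChain_cons.2 ⟨hhd, hch⟩
  have hz2 : ZR (2 :: k :: rest) := by
    rw [ZR_cons_iff]
    refine ⟨le_rfl, ?_, hchk⟩
    intro x hx
    simp only [List.head?_cons, Option.mem_some_iff] at hx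
    omega
  have hv1 : (rest.reverse ++ [k]).IsZeckendorfRep := by
    rw [isZeck_iff_ZR]
    have e : (rest.reverse ++ [k]).reverse = k :: rest := by simp
    rw [e]
    exact hz
  have hv2 : (rest.reverse ++ [k, 2]).IsZeckendorfRep := by
    rw [isZeck_iff_ZR]
    have e : (rest.reverse ++ [k, 2]).reverse = 2 :: k :: rest := by simp
    rw [e]
    exact hz2
  have hsum : ((rest.reverse ++ [k, 2]).map Nat.fib).sum
      = ((rest.reverse ++ [k]).map Nat.fib).sum + 1 := by
    simp only [List.map_append, List.sum_append, List.map_cons, List.sum_cons, List.map_nil,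
      List.sum_nil]
    have e2 : Nat.fib 2 = 1 := rfl
    omega
  have hq1 : rq [k] = (1 + (k-1-1)/2 * 1, (k-1-1)/2 * 1) := by
    show rqStep (k - 1) (1, 0) = _
    unfold rqStep
    rw [if_pos (by omega)]
  have hq2 : rq [k, 2] = (1 + ((k-2-2)/2 * 1 + 0), (k-2-2)/2 * 1 + 0) := by
    show rqStep (k - 2) (rq [2]) = _
    rw [rq_two]
    unfold rqStep
    rw [if_neg (by omega)]
  have hd := R_desc rest.reverse [k] [k, 2] hv1 hv2 hsum rfl
    (by rw [hq1, hq2]; simp only; omega) (by rw [hq1, hq2]; simp only; omega)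
  have es : ((rest.reverse ++ [k]).map Nat.fib).sum = ((k :: rest).map Nat.fib).sum := by
    have e : (k :: rest).reverse = rest.reverse ++ [k] := by simp
    rw [← e, sumF_reverse]
  rwa [es] at hd

/-- Descent when the bottom is `2` and the next index is odd. -/
lemma descB (p : ℕ) (rest : List ℕ) (hz : ZR (2 :: p :: rest)) (hp : p % 2 = 1) :
    R (((2 :: p :: rest).map Nat.fib).sum + 1) < R (((2 :: p :: rest).map Nat.fib).sum) := by
  obtain ⟨-, hhd2, hch2⟩ := (ZR_cons_iff 2 (p :: rest)).1 hz
  have hp4 : 4 ≤ p := by have := hhd2 p rfl; omega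
  have hp5 : 5 ≤ p := by omega
  have hz3 : ZR (3 :: p :: rest) := by
    rw [ZR_cons_iff]
    refine ⟨by omega, ?_, hch2⟩
    intro x hx
    simp only [List.head?_cons, Option.mem_some_iff] at hx
    omega
  have hv1 : (rest.reverse ++ [p, 2]).IsZeckendorfRep := by
    rw [isZeck_iff_ZR]
    have e : (rest.reverse ++ [p, 2]).reverse = 2 :: p :: rest := by simp
    rw [e]
    exact hz
  have hv2 : (rest.reverse ++ [p, 3]).IsZeckendorfRep := by
    rw [isZeck_iff_ZR]
    have e : (rest.reverse ++ [p, 3]).reverse = 3 :: p :: rest := by simp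
    rw [e]
    exact hz3
  have hsum : ((rest.reverse ++ [p, 3]).map Nat.fib).sum
      = ((rest.reverse ++ [p, 2]).map Nat.fib).sum + 1 := by
    simp only [List.map_append, List.sum_append, List.map_cons, List.sum_cons, List.map_nil,
      List.sum_nil]
    have e3 : Nat.fib 3 = 2 := rfl
    have e2 : Nat.fib 2 = 1 := rfl
    omega
  have hq1 : rq [p, 2] = (1 + (p-2-1)/2 * 1, (p-2-1)/2 * 1) := by
    show rqStep (p - 2) (rq [2]) = _
    rw [rq_two]
    unfold rqStep
    rw [if_pos (by omega)]
  have hq2 : rq [p, 3] = (1 + ((p-3-2)/2 * 1 + 0), (p-3-2)/2 * 1 + 0) := by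
    show rqStep (p - 3) (rq [3]) = _
    rw [rq_three]
    unfold rqStep
    rw [if_neg (by omega)]
  have hd := R_desc rest.reverse [p, 2] [p, 3] hv1 hv2 hsum rfl
    (by rw [hq1, hq2]; simp only; omega) (by rw [hq1, hq2]; simp only; omega)
  have es : ((rest.reverse ++ [p, 2]).map Nat.fib).sum = ((2 :: p :: rest).map Nat.fib).sum := by
    have e : (2 :: p :: rest).reverse = rest.reverse ++ [p, 2] := by
      simp
    rw [← e, sumF_reverse]
  rwa [es] at hd

lemma ZR_of_chain {h : ℕ} {tl : List ℕ} (hc : (h :: tl).Chain' (fun a b => a + 2 ≤ b))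
    (h2 : 2 ≤ h) : ZR (h :: tl) := by
  rw [ZR_cons_iff]
  rw [List.Chain', List.isChain_cons] at hc
  exact ⟨h2, hc.1, hc.2⟩

lemma key_s17 (rl : List ℕ) (hz : ZR rl) (hne : rl ≠ []) :
    ∃ i : Fin 3, R ((rl.map Nat.fib).sum + (i : ℕ) + 1) < R ((rl.map Nat.fib).sum + (i : ℕ)) := by
  obtain ⟨k, rest, rfl⟩ : ∃ k rest, rl = k :: rest := by
    cases rl with
    | nil => exact absurd rfl hne
    | cons k rest => exact ⟨k, rest, rfl⟩
  obtain ⟨hk2, hhd, hch⟩ := (ZR_cons_iff k rest).1 hz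
  by_cases hke : k % 2 = 0
  · rcases Nat.lt_or_ge k 4 with hk4 | hk4
    · -- k = 2
      have hk : k = 2 := by omega
      subst hk
      cases rest with
      | nil =>
        refine ⟨2, ?_⟩
        have hzz : ZR [4] := by
          rw [ZR_cons_iff]
          exact ⟨by omega, by simp, List.isChain_nil⟩
        have h := descA 4 [] hzz (by norm_num) le_rfl
        have e : (([4] : List ℕ).map Nat.fib).sum = 3 := rfl
        have en : (([2] : List ℕ).map Nat.fib).sum = 1 := rfl
        rw [e] at h
        rw [en]
        exact h
      | cons p rest' =>
        have hp4 : 4 ≤ p := by have := hhd p rfl; omega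
        by_cases hpo : p % 2 = 1
        · exact ⟨0, by simpa using descB p rest' hz hpo⟩
        · obtain ⟨h, tl, he, hcc, hpar, hge3, hsumc⟩ := carry_spec (p :: rest') 3
            (by intro x hx; simp only [List.head?_cons, Option.mem_some_iff] at hx; omega) hch
          have hsum1 : ((h :: tl).map Nat.fib).sum = ((2 :: p :: rest').map Nat.fib).sum + 1 := by
            rw [← he, hsumc]
            simp only [List.map_cons, List.sum_cons]
            have e3 : Nat.fib 3 = 2 := rfl
            have e2 : Nat.fib 2 = 1 := rfl
            omega
          have hodd : h % 2 = 1 := by omega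
          rcases Nat.lt_or_ge h 5 with hh5 | hh5
          · -- h = 3 : carry once more at n+2
            have hh3 : h = 3 := by omega
            subst hh3
            obtain ⟨h', tl', he', hcc', hpar', hge4, hsumc'⟩ := carry_spec tl 4
              (by
                intro x hx
                have := (List.isChain_cons.1 hcc).1 x hx
                omega) hcc.tail
            have hsum2 : ((h' :: tl').map Nat.fib).sum
                = ((2 :: p :: rest').map Nat.fib).sum + 2 := by
              rw [← he', hsumc']
              have e4 : Nat.fib 4 = 3 := rfl
              have e3 : Nat.fib 3 = 2 := rfl
              have := hsum1
              simp only [List.map_cons, List.sum_cons] at this ⊢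
              omega
            refine ⟨2, ?_⟩
            have hd := descA h' tl' (ZR_of_chain hcc' (by omega)) (by omega) hge4
            rw [hsum2] at hd
            exact hd
          · -- h ≥ 5 odd : descB at n+2
            refine ⟨2, ?_⟩
            have hzz : ZR (2 :: h :: tl) := by
              rw [ZR_cons_iff]
              refine ⟨le_rfl, ?_, hcc⟩
              intro x hx
              simp only [List.head?_cons, Option.mem_some_iff] at hx
              omega
            have hd := descB h tl hzz hodd
            have hsum2 : ((2 :: h :: tl).map Nat.fib).sum
                = ((2 :: p :: rest').map Nat.fib).sum + 2 := by
              simp only [List.map_cons, List.sum_cons] at hsum1 ⊢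
              have e2 : Nat.fib 2 = 1 := rfl
              omega
            rw [hsum2] at hd
            exact hd
    · exact ⟨0, by simpa using descA k rest hz hke hk4⟩
  · have hko : k % 2 = 1 := by omega
    rcases Nat.lt_or_ge k 5 with hk5 | hk5
    · -- k = 3
      have hk3 : k = 3 := by omega
      subst hk3
      obtain ⟨h', tl', he', hcc', hpar', hge4, hsumc'⟩ := carry_spec rest 4
        (by intro x hx; have := hhd x hx; omega) hch
      have hsum1 : ((h' :: tl').map Nat.fib).sum = ((3 :: rest).map Nat.fib).sum + 1 := by
        rw [← he', hsumc']
        simp only [List.map_cons, List.sum_cons]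
        have e4 : Nat.fib 4 = 3 := rfl
        have e3 : Nat.fib 3 = 2 := rfl
        omega
      refine ⟨1, ?_⟩
      have hd := descA h' tl' (ZR_of_chain hcc' (by omega)) (by omega) hge4
      rw [hsum1] at hd
      exact hd
    · -- k odd ≥ 5 : descB at n+1
      refine ⟨1, ?_⟩
      have hzz : ZR (2 :: k :: rest) := by
        rw [ZR_cons_iff]
        refine ⟨le_rfl, ?_, List.isChain_cons.2 ⟨hhd, hch⟩⟩
        intro x hx
        simp only [List.head?_cons, Option.mem_some_iff] at hx
        omega
      have hd := descB k rest hzz hko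
      have hsum1 : ((2 :: k :: rest).map Nat.fib).sum = ((k :: rest).map Nat.fib).sum + 1 := by
        simp only [List.map_cons, List.sum_cons]
        have e2 : Nat.fib 2 = 1 := rfl
        omega
      rw [hsum1] at hd
      exact hd

lemma R_zero : R 0 = 1 := by
  have hv : List.IsZeckendorfRep [] := by simp
  have := R_eq [] hv
  simpa [rq] using this

lemma R_one : R 1 = 1 := by
  have hv : List.IsZeckendorfRep [2] := by
    unfold List.IsZeckendorfRep
    norm_num [List.isChain_cons_cons]
  have := R_eq [2] hv
  have e : ((List.map Nat.fib [2]).sum) = 1 := rfl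
  rw [e, rq_two] at this
  exact this

lemma R_two : R 2 = 1 := by
  have hv : List.IsZeckendorfRep [3] := by
    unfold List.IsZeckendorfRep
    norm_num [List.isChain_cons_cons]
  have := R_eq [3] hv
  have e : ((List.map Nat.fib [3]).sum) = 2 := rfl
  rw [e, rq_three] at this
  exact this

lemma R_three : R 3 = 2 := by
  have hv : List.IsZeckendorfRep [4] := by
    unfold List.IsZeckendorfRep
    norm_num [List.isChain_cons_cons]
  have := R_eq [4] hv
  have e : ((List.map Nat.fib [4]).sum) = 3 := rfl
  have e2 : (rq [4]).1 = 2 := by decide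
  rw [e] at this
  rw [this, e2]

theorem stmt_17_aux :
    (R 0 ≤ R 1 ∧ R 1 ≤ R 2 ∧ R 2 ≤ R 3) ∧
    ∀ n : ℕ, 1 ≤ n → ∃ i : Fin 3, R (n + (i : ℕ) + 1) < R (n + (i : ℕ)) := by
  constructor
  · rw [R_zero, R_one, R_two, R_three]
    omega
  · intro n hn
    have hl := Nat.isZeckendorfRep_zeckendorf n
    have hsum := Nat.sum_zeckendorf_fib n
    have hz : ZR (n.zeckendorf).reverse := (isZeck_iff_ZR _).1 hl
    have hne : (n.zeckendorf).reverse ≠ [] := by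
      intro hcon
      have h0 : n.zeckendorf = [] := by simpa using congrArg List.reverse hcon
      rw [h0] at hsum
      simp at hsum
      omega
    obtain ⟨i, hi⟩ := key_s17 _ hz hne
    rw [sumF_reverse, hsum] at hi
    exact ⟨i, hi⟩

/-- R(0) ≤ R(1) ≤ R(2) ≤ R(3), but for every n ≥ 1 there is some
i ∈ {0, 1, 2} with R(n+i) > R(n+i+1); i.e. the unique longest run of consecutive
indices on which R is non-decreasing is R(0), R(1), R(2), R(3). -/
theorem stmt_17 :
    (R 0 ≤ R 1 ∧ R 1 ≤ R 2 ∧ R 2 ≤ R 3) ∧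
    ∀ n : ℕ, 1 ≤ n → ∃ i : Fin 3, R (n + (i : ℕ) + 1) < R (n + (i : ℕ)) := by
  exact stmt_17_aux

end
end
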